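/- arXiv:2605.15027 — 14 statements merged into one kernel-verified Lean document; each statement's English description precedes it below -/
import Mathlib

section
/- If ℓ₁ and ℓ₂ are Lyndon words with ℓ₁ < ℓ₂, then the concatenation ℓ₁ℓ₂ is also a Lyndon word, and consequently ℓ₁ℓ₂ < ℓ₂ℓ₁. -/
variable {I : Type*} [LinearOrder I]

private lemma lex_prefix_strict (s : List I) (a : I) (t : List I) :
    List.Lex (· < ·) s (s ++ a :: t) := by
  induction s with
  | nil => exact List.Lex.nil
  | cons x xs ih => exact List.Lex.cons ih

private lemma lex_append_of_not_prefix {a b : List I}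
    (h : List.Lex (· < ·) a b) (hp : ¬ a <+: b) (c d : List I) :
    List.Lex (· < ·) (a ++ c) (b ++ d) := by
  induction h with
  | nil => exact absurd (List.nil_prefix) hp
  | @rel x y as bs h => exact List.Lex.rel h
  | @cons x as bs h ih =>
      refine List.Lex.cons (ih ?_)
      intro hpre
      exact hp (List.cons_prefix_cons.mpr ⟨rfl, hpre⟩)

private lemma lt_iff' (a b : List I) : a < b ↔ List.Lex (· < ·) a b :=
  Iff.rfl

/-- A word is *Lyndon* if it is nonempty and lexicographically strictly smaller
than each of its proper nonempty suffixes. -/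
def IsLyndon (w : List I) : Prop :=
  w ≠ [] ∧ ∀ u v : List I, w = u ++ v → u ≠ [] → v ≠ [] → w < v

/-- If `ℓ₁` and `ℓ₂` are Lyndon words with `ℓ₁ < ℓ₂`, then `ℓ₁ℓ₂` is Lyndon,
and consequently `ℓ₁ℓ₂ < ℓ₂ℓ₁`. -/
theorem lyndon_append_of_lt (l₁ l₂ : List I)
    (h₁ : IsLyndon l₁) (h₂ : IsLyndon l₂) (hlt : l₁ < l₂) :
    IsLyndon (l₁ ++ l₂) ∧ l₁ ++ l₂ < l₂ ++ l₁ := by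
  obtain ⟨hne₁, hL₁⟩ := h₁
  obtain ⟨hne₂, hL₂⟩ := h₂
  -- core claim : l₁ ++ l₂ < l₂
  have hcore : l₁ ++ l₂ < l₂ := by
    by_cases hp : l₁ <+: l₂
    · obtain ⟨w, hw⟩ := hp
      have hwne : w ≠ [] := by
        rintro rfl
        simp at hw
        exact ne_of_lt hlt hw
      have h2w : l₂ < w := hL₂ l₁ w hw.symm hne₁ hwne
      rw [lt_iff'] at h2w ⊢
      have := List.Lex.append_left _ h2w l₁
      rwa [hw] at this
    · rw [lt_iff'] at hlt ⊢
      have := lex_append_of_not_prefix hlt hp l₂ []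
      simpa using this
  have hlyndon : IsLyndon (l₁ ++ l₂) := by
    refine ⟨by simp [hne₁], ?_⟩
    intro u v huv hu hv
    -- v is either a suffix of l₂ or contains a tail of l₁ followed by l₂
    rcases List.append_eq_append_iff.mp huv.symm with ⟨w, hw1, hw2⟩ | ⟨w, hw1, hw2⟩
    · -- l₁ = u ++ w, v = w ++ l₂
      subst hw2
      rcases eq_or_ne w [] with rfl | hwne
      · simpa using hcore
      · have h1w : l₁ < w := hL₁ u w hw1 hu hwne
        have hnp : ¬ l₁ <+: w := by
          intro hpre
          have := hpre.length_le
          have := congrArg List.length hw1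
          simp [List.length_append] at this
          have hupos : 0 < u.length := List.length_pos_iff.mpr hu
          omega
        rw [lt_iff']
        exact lex_append_of_not_prefix ((lt_iff' _ _).mp h1w) hnp l₂ l₂
    · -- u = l₁ ++ w, l₂ = w ++ v
      rcases eq_or_ne w [] with rfl | hwne
      · simp only [List.nil_append] at hw2
        subst hw2
        exact hcore
      · have h2v : l₂ < v := hL₂ w v hw2 hwne hv
        exact lt_trans hcore h2v
  refine ⟨hlyndon, ?_⟩
  calc l₁ ++ l₂ < l₂ := hcore
    _ ≤ l₂ ++ l₁ := by
        cases l₁ with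
        | nil => simp
        | cons a t => exact le_of_lt ((lt_iff' _ _).mpr (lex_prefix_strict l₂ a t))
end

section
/- Let w = ℓ₁ℓ₂⋯ℓ_k and w' = ℓ'₁ℓ'₂⋯ℓ'_{k'} be the canonical factorizations of two nonempty words, and suppose that w is not a prefix of w'. Then w < w' if and only if there exists an index a with 1 ≤ a ≤ min(k, k') such that ℓ_b = ℓ'_b for all 1 ≤ b < a and ℓ_a < ℓ'_a. -/
variable {I : Type*} [LinearOrder I]

/-- `fs` is the canonical (Chen–Fox–Lyndon) factorization of `w`:
a weakly decreasing list of Lyndon words whose concatenation is `w`. -/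
def IsCFLFactorization (w : List I) (fs : List (List I)) : Prop :=
  fs.flatten = w ∧ (∀ f ∈ fs, IsLyndon f) ∧ fs.Chain' (· ≥ ·)

/-!
Cancelling the common factors, it suffices to show that `ℓ < ℓ'` forces `ℓ u < ℓ' u'` when `u` is
a product of Lyndon words `≤ ℓ` and `ℓ'` is Lyndon. If `ℓ` is not a prefix of `ℓ'` the first
mismatch already decides. Otherwise `ℓ' = ℓ t` with `t` a proper suffix of `ℓ'`, and every factor
of `u` is `≤ ℓ' < t`; peeling them off one at a time (each is either a prefix of the remaining
suffix of `ℓ'`, which is again `> ℓ'`, or already smaller at a mismatch) gives `u < t`.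
For the converse, compare `fs` and `fs'` lexicographically: a prefix relation between the
factorizations is excluded by the hypotheses, and a first difference in the wrong direction
would give `w' < w`.
-/

namespace List

variable {α : Type*} [LinearOrder α]

theorem append_lt_of_lt_of_not_prefix {u v : List α} (h : u < v) (hpre : ¬u <+: v)
    (x : List α) : u ++ x < v := by
  induction h with
  | nil => exact absurd nil_prefix hpre
  | cons _ ih => exact Lex.cons (ih fun hp => hpre (cons_prefix_cons.mpr ⟨rfl, hp⟩))
  | rel h => exact Lex.rel h

theorem isPrefix_or_exists_take_eq_of_lt {xs ys : List α} (h : xs < ys) :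
    xs <+: ys ∨ ∃ (a : ℕ) (ha : a < xs.length) (ha' : a < ys.length),
      xs.take a = ys.take a ∧ xs.get ⟨a, ha⟩ < ys.get ⟨a, ha'⟩ := by
  induction h with
  | nil => exact Or.inl nil_prefix
  | cons _ ih =>
    rcases ih with hp | ⟨a, ha, ha', htake, hlt⟩
    · exact Or.inl (cons_prefix_cons.mpr ⟨rfl, hp⟩)
    · exact Or.inr ⟨a + 1, Nat.succ_lt_succ ha, Nat.succ_lt_succ ha', by simp [htake], by simpa⟩
  | rel h => exact Or.inr ⟨0, Nat.succ_pos _, Nat.succ_pos _, rfl, h⟩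

end List

open List

theorem IsLyndon.flatten_lt_of_suffix {L : List I} (hL : IsLyndon L) {gs : List (List I)}
    (hgs : ∀ g ∈ gs, g ≤ L) {p t : List I} (hLpt : L = p ++ t) (hp : p ≠ []) (ht : t ≠ []) :
    gs.flatten < t := by
  induction gs generalizing p t with
  | nil =>
    obtain ⟨x, t, rfl⟩ := exists_cons_of_ne_nil ht
    exact nil_lt_cons x t
  | cons g gs ih =>
    have hgt : g < t := (hgs g mem_cons_self).trans_lt (hL.2 p t hLpt hp ht)
    by_cases hgp : g <+: t
    · obtain ⟨s, rfl⟩ := hgp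
      have hs : s ≠ [] := by rintro rfl; simp at hgt
      have hrest : gs.flatten < s :=
        ih (fun g' hg' => hgs g' (mem_cons_of_mem g hg')) (by rw [hLpt, append_assoc])
          (by simp [hp]) hs
      simpa using append_left_lt hrest
    · simpa using append_lt_of_lt_of_not_prefix hgt hgp gs.flatten

theorem append_flatten_lt_of_lt {ℓ ℓ' : List I} (hℓ : ℓ ≠ []) (hℓ' : IsLyndon ℓ')
    (hlt : ℓ < ℓ') {gs : List (List I)} (hgs : ∀ g ∈ gs, g ≤ ℓ) (r : List I) :
    ℓ ++ gs.flatten < ℓ' ++ r := by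
  by_cases hpre : ℓ <+: ℓ'
  · obtain ⟨t, rfl⟩ := hpre
    have ht : t ≠ [] := by rintro rfl; simp at hlt
    have hrest : gs.flatten < t :=
      hℓ'.flatten_lt_of_suffix (fun g hg => (hgs g hg).trans hlt.le) rfl hℓ ht
    simpa using append_left_lt (Lex.append_right (· < ·) r hrest)
  · exact Lex.append_right (· < ·) r (append_lt_of_lt_of_not_prefix hlt hpre gs.flatten)

theorem flatten_lt_flatten_of_take_eq_of_get_lt {fs fs' : List (List I)}
    (hlyn : ∀ f ∈ fs, IsLyndon f) (hch : fs.IsChain (· ≥ ·)) (hlyn' : ∀ f ∈ fs', IsLyndon f)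
    {a : ℕ} (ha : a < fs.length) (ha' : a < fs'.length) (htake : fs.take a = fs'.take a)
    (hlt : fs.get ⟨a, ha⟩ < fs'.get ⟨a, ha'⟩) :
    fs.flatten < fs'.flatten := by
  have hdrop : fs.drop a = fs[a] :: fs.drop (a + 1) := drop_eq_getElem_cons ha
  have hdrop' : fs'.drop a = fs'[a] :: fs'.drop (a + 1) := drop_eq_getElem_cons ha'
  have hlater : ∀ g ∈ fs.drop (a + 1), g ≤ fs[a] := by
    have := (isChain_iff_pairwise.mp hch).drop (i := a)
    rw [hdrop] at this
    exact (pairwise_cons.mp this).1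
  rw [← take_append_drop a fs, ← take_append_drop a fs', hdrop, hdrop', htake]
  simp only [flatten_append, flatten_cons]
  exact append_left_lt <| append_flatten_lt_of_lt (hlyn _ (getElem_mem ha)).1
    (hlyn' _ (getElem_mem ha')) (by simpa using hlt) hlater _

theorem melancon_lt_iff_general (w w' : List I) (fs fs' : List (List I))
    (h : IsCFLFactorization w fs) (h' : IsCFLFactorization w' fs')
    (hpre : ¬ w <+: w') :
    w < w' ↔ ∃ (a : ℕ) (ha : a < fs.length) (ha' : a < fs'.length),
      fs.take a = fs'.take a ∧ fs.get ⟨a, ha⟩ < fs'.get ⟨a, ha'⟩ := by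
  obtain ⟨rfl, hlyn, hch⟩ := h
  obtain ⟨rfl, hlyn', hch'⟩ := h'
  refine ⟨fun hlt => ?_, fun ⟨a, ha, ha', htake, hget⟩ =>
    flatten_lt_flatten_of_take_eq_of_get_lt hlyn hch hlyn' ha ha' htake hget⟩
  rcases lt_trichotomy fs fs' with hfs | rfl | hfs
  · exact (isPrefix_or_exists_take_eq_of_lt hfs).resolve_left fun hp => hpre hp.flatten
  · exact absurd hlt (lt_irrefl _)
  · rcases isPrefix_or_exists_take_eq_of_lt hfs with hp | ⟨a, ha', ha, htake, hget⟩
    · exact absurd hlt (List.not_lt.mpr hp.flatten.le)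
    · exact absurd (flatten_lt_flatten_of_take_eq_of_get_lt hlyn' hch' hlyn ha' ha htake hget)
        (lt_asymm hlt)

/-- Melançon's lemma: for canonical factorizations `w = ℓ₁⋯ℓ_k` and
`w' = ℓ'₁⋯ℓ'_{k'}` such that `w` is not a prefix of `w'`, one has `w < w'`
iff there is an index `a` (`0`-based, `a < min(k,k')`) with the first `a`
factors equal and `ℓ_a < ℓ'_a`. -/
theorem melancon_lt_iff (w w' : List I) (fs fs' : List (List I))
    (hw : w ≠ []) (hw' : w' ≠ [])
    (h : IsCFLFactorization w fs) (h' : IsCFLFactorization w' fs')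
    (hpre : ¬ w <+: w') :
    w < w' ↔ ∃ (a : ℕ) (ha : a < fs.length) (ha' : a < fs'.length),
      fs.take a = fs'.take a ∧ fs.get ⟨a, ha⟩ < fs'.get ⟨a, ha'⟩ :=
  melancon_lt_iff_general w w' fs fs' h h' hpre
end

section
/- Let ℓ be a Lyndon word and let m be a Lyndon word of length greater than 1 with standard factorization m = uv, such that the length of ℓ is strictly smaller than the length of m. Then ℓ > u if and only if ℓ > m (i.e. ℓ > uv). -/
variable {I : Type*} [LinearOrder I]

/-- `m = u ++ v` is the *standard factorization* of the Lyndon word `m`: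
`u` is the longest proper nonempty Lyndon prefix of `m`. -/
def IsStandardFactorization (m u v : List I) : Prop :=
  m = u ++ v ∧ u ≠ [] ∧ v ≠ [] ∧ IsLyndon u ∧
    ∀ p q : List I, m = p ++ q → p ≠ [] → q ≠ [] → IsLyndon p → p.length ≤ u.length

/-! If `ℓ > m` then `ℓ > u`, as `u` is a proper prefix of `m`. Conversely, if `u < ℓ < m = uv`
(`ℓ ≠ m` by length), then `ℓ = ut` with `t < v`. Either `t` is a prefix of `v`, and `ℓ` itself is a
proper Lyndon prefix of `m`; or `t = w a t'` and `v = w b v'` with `a < b`, and `u w b` is a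
proper Lyndon prefix of `m`, since raising the last letter of a prefix of a Lyndon word keeps it
Lyndon. Either prefix is longer than `u`, contradicting the maximality of `u`. -/

namespace List

theorem isPrefix_or_exists_of_lt {x y : List I} (h : x < y) :
    x <+: y ∨ ∃ w a b x' y', a < b ∧ x = w ++ a :: x' ∧ y = w ++ b :: y' := by
  induction h with
  | nil => exact .inl nil_prefix
  | @cons a _ _ _ ih =>
    rcases ih with hp | ⟨w, c, d, x', y', hcd, rfl, rfl⟩
    · exact .inl (cons_prefix_cons.mpr ⟨rfl, hp⟩)
    · exact .inr ⟨a :: w, c, d, x', y', hcd, rfl, rfl⟩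
  | @rel a _ b _ hab => exact .inr ⟨[], a, b, _, _, hab, rfl, rfl⟩

theorem lt_of_append_lt_append_left {w x y : List I} (h : w ++ x < w ++ y) : x < y := by
  by_contra hxy
  exact append_left_le (List.not_lt.mp hxy) h

theorem lt_append_of_ne_nil (x : List I) {y : List I} (hy : y ≠ []) : x < x ++ y := by
  obtain ⟨c, y, rfl⟩ := exists_cons_of_ne_nil hy
  simpa using append_left_lt (l₁ := x) (nil_lt_cons c y)

theorem exists_eq_append_of_lt_of_lt_append {u l v : List I} (hul : u < l) (hlu : l < u ++ v) :
    ∃ t, l = u ++ t ∧ t < v := by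
  rcases isPrefix_or_exists_of_lt hul with ⟨t, rfl⟩ | ⟨w, a, b, u', l', hab, rfl, rfl⟩
  · exact ⟨t, rfl, lt_of_append_lt_append_left hlu⟩
  · have : w ++ a :: (u' ++ v) < w ++ b :: l' := append_left_lt (.rel hab)
    exact absurd (hlu.trans (by simpa using this)) (lt_irrefl _)

-- The comparison is decided by position `s.length` at the latest, where the left word carries
-- a letter `≤ a`.
theorem append_lt_append_cons_of_lt {a b : I} {r r' : List I} (hab : a < b) (x y : List I) :
    ∀ {p s : List I}, s.length < p.length → p ++ a :: r < s ++ a :: r' → p ++ x < s ++ b :: y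
  | [], _, hlen, _ => by simp at hlen
  | c :: p, [], _, h => by
    rcases cons_lt_cons_iff.mp h with hca | ⟨rfl, -⟩
    · exact .rel (hca.trans hab)
    · exact .rel hab
  | c :: p, d :: s, hlen, h => by
    rcases cons_lt_cons_iff.mp h with hcd | ⟨rfl, htail⟩
    · exact .rel hcd
    · exact .cons (append_lt_append_cons_of_lt hab x y (by simpa using hlen) htail)

end List

theorem IsLyndon.append_singleton_of_lt {p r : List I} {a b : I} (hl : IsLyndon (p ++ a :: r))
    (hab : a < b) : IsLyndon (p ++ [b]) := by
  refine ⟨by simp, fun x y hxy hx hy => ?_⟩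
  obtain ⟨s, c, rfl⟩ := (List.eq_nil_or_concat y).resolve_left hy
  obtain ⟨rfl, hcb⟩ : x ++ s = p ∧ c = b := by simpa [← List.append_assoc] using hxy.symm
  subst c
  have hls : x ++ s ++ a :: r < s ++ a :: r := hl.2 x (s ++ a :: r) (by simp) hx (by simp)
  have hlen : s.length < (x ++ s).length := by simp [List.length_pos_iff.mpr hx]
  simpa [hxy] using List.append_lt_append_cons_of_lt hab [b] [] hlen hls

theorem IsLyndon.exists_lyndon_prefix_of_lt {u t v : List I} (hl : IsLyndon (u ++ t)) (ht : t ≠ [])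
    (htv : t < v) : ∃ p q, u ++ v = p ++ q ∧ IsLyndon p ∧ u.length < p.length ∧
      p.length ≤ (u ++ t).length := by
  rcases List.isPrefix_or_exists_of_lt htv with ⟨z, rfl⟩ | ⟨w, a, b, t', v', hab, rfl, rfl⟩
  · exact ⟨u ++ t, z, by simp, hl, by simp [List.length_pos_iff.mpr ht], le_rfl⟩
  · refine ⟨u ++ w ++ [b], v', by simp, ?_, by simp, by simp⟩
    exact IsLyndon.append_singleton_of_lt (r := t') (by simpa using hl) hab

theorem gt_leftStandard_iff_gt_general (l m u v : List I)
    (hl : IsLyndon l)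
    (hsf : IsStandardFactorization m u v) (hlen : l.length < m.length) :
    u < l ↔ m < l := by
  obtain ⟨rfl, -, hv, -, hmax⟩ := hsf
  refine ⟨fun hul => ?_, fun hml => (List.lt_append_of_ne_nil u hv).trans hml⟩
  by_contra hml
  have hlm : l < u ++ v := lt_of_le_of_ne (not_lt.mp hml) (by rintro rfl; exact lt_irrefl _ hlen)
  obtain ⟨t, rfl, htv⟩ := List.exists_eq_append_of_lt_of_lt_append hul hlm
  have ht : t ≠ [] := by rintro rfl; simp at hul
  obtain ⟨p, q, hpq, hp, hup, hpl⟩ := hl.exists_lyndon_prefix_of_lt ht htv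
  have hq : q ≠ [] := by rintro rfl; rw [hpq, List.append_nil] at hlen; omega
  have := hmax p q hpq (List.ne_nil_of_length_pos (by omega)) hq hp
  omega

/-- Let `ℓ` be Lyndon and `m = uv` the standard factorization of a Lyndon word `m`
of length `> 1`, with `|ℓ| < |m|`. Then `ℓ > u ↔ ℓ > m`. -/
theorem gt_leftStandard_iff_gt (l m u v : List I)
    (hl : IsLyndon l) (hm : IsLyndon m) (hmlen : 1 < m.length)
    (hsf : IsStandardFactorization m u v) (hlen : l.length < m.length) :
    u < l ↔ m < l :=
  gt_leftStandard_iff_gt_general l m u v hl hsf hlen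
end

section
/- For any Lyndon word ℓ of length greater than 1, the lexicographically smallest proper nonempty suffix of ℓ is ℓ^r, the right factor of the costandard factorization of ℓ (i.e. the longest proper nonempty Lyndon suffix of ℓ). -/
variable {I : Type*} [LinearOrder I]

/-- `m = l ++ r` is the *costandard factorization* of the Lyndon word `m`:
`r` is the longest proper nonempty Lyndon suffix of `m`. -/
def IsCostandardFactorization (m l r : List I) : Prop :=
  m = l ++ r ∧ l ≠ [] ∧ r ≠ [] ∧ IsLyndon r ∧
    ∀ p q : List I, m = p ++ q → p ≠ [] → q ≠ [] → IsLyndon q → q.length ≤ r.length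

theorem aux_suffix_of_suffix {a b c : List I} (h1 : a <:+ c) (h2 : b <:+ c)
    (hlen : a.length ≤ b.length) : a <:+ b := by
  rw [← List.reverse_prefix] at h1 h2 ⊢
  exact List.prefix_of_prefix_length_le h1 h2 (by simpa using hlen)

/-- The lexicographically smallest proper nonempty suffix of a Lyndon word `m`
(of length `> 1`) is the right factor `r` of its costandard factorization. -/
theorem costandard_right_is_min_suffix (m l r : List I)
    (hm : IsLyndon m) (hlen : 1 < m.length)
    (hcf : IsCostandardFactorization m l r) :
    ∀ p s : List I, m = p ++ s → p ≠ [] → s ≠ [] → r ≤ s := by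
  obtain ⟨hmlr, hl, hr, hrl, hmax⟩ := hcf
  have hrsuf : r <:+ m := ⟨l, hmlr.symm⟩
  have key : ∀ n : ℕ, ∀ p s : List I, m = p ++ s → p ≠ [] → s ≠ [] →
      s.length ≤ n → r ≤ s := by
    intro n
    induction n with
    | zero =>
      intro p s _ _ hs hlen
      exact absurd (List.eq_nil_of_length_eq_zero (Nat.le_zero.mp hlen)) hs
    | succ n ih =>
      intro p s hps hp hs hslen
      by_cases hsr : s.length ≤ r.length
      · -- s is a suffix of r
        obtain ⟨u, hu⟩ := aux_suffix_of_suffix ⟨p, hps.symm⟩ hrsuf hsr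
        rcases eq_or_ne u [] with rfl | hune
        · simp only [List.nil_append] at hu
          exact le_of_eq hu.symm
        · exact le_of_lt (hrl.2 u s hu.symm hune hs)
      · by_cases hlt : s < r
        · exfalso
          have hns : ¬ IsLyndon s := by
            intro hly
            exact hsr (hmax p s hps hp hs hly)
          have : ¬ ∀ u v : List I, s = u ++ v → u ≠ [] → v ≠ [] → s < v :=
            fun h => hns ⟨hs, h⟩
          push_neg at this
          obtain ⟨u, v, hsuv, hu, hv, hnv⟩ := this
          have hvs : v ≤ s := hnv
          have hm2 : m = (p ++ u) ++ v := by rw [hps, hsuv, List.append_assoc]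
          have hvlen : v.length ≤ n := by
            have : s.length = u.length + v.length := by
              rw [hsuv, List.length_append]
            have hupos : 0 < u.length := List.length_pos_iff.mpr hu
            omega
          have hrv : r ≤ v := ih (p ++ u) v hm2 (by simp [hp]) hv hvlen
          exact absurd (lt_of_le_of_lt (hrv.trans hvs) hlt) (lt_irrefl r)
        · exact not_lt.mp hlt
  intro p s hps hp hs
  exact key s.length p s hps hp hs le_rfl
end

section
/- Let ℓ, ℓ₁, ℓ₂ be Lyndon words with ℓ = ℓ₁ℓ₂ and with ℓ₁ of length greater than 1. Then ℓ₂ = ℓ^r (the right factor of the costandard factorization of ℓ) if and only if ℓ₁^r ≥ ℓ₂, where ℓ₁^r is the right factor of the costandard factorization of ℓ₁. -/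
variable {I : Type*} [LinearOrder I]

/-- Two suffixes of the same list are comparable: the shorter is a suffix of
the longer. -/
lemma suffix_of_suffix_length_le' {s t m : List I} (hs : s <:+ m) (ht : t <:+ m)
    (h : s.length ≤ t.length) : s <:+ t := by
  have := List.prefix_of_prefix_length_le (List.reverse_prefix.mpr hs)
    (List.reverse_prefix.mpr ht) (by simpa using h)
  exact List.reverse_prefix.mp this

/-- A proper prefix is lexicographically smaller. -/
lemma lex_self_append {u v : List I} (hv : v ≠ []) : u < u ++ v := by
  induction u with
  | nil =>
    cases v with
    | nil => exact absurd rfl hv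
    | cons b t => exact List.Lex.nil
  | cons a t ih => exact List.Lex.cons ih

/-- Left cancellation for `<`. -/
lemma lex_append_left' {x y : List I} (u : List I) (h : x < y) : u ++ x < u ++ y :=
  List.Lex.append_left _ h u

/-- If `u < v` but `u` is not a prefix of `v`, the first difference decides, so
appending anything on the right preserves the inequality. -/
lemma lex_append_of_not_prefix_s4 : ∀ {u v : List I}, u < v → ¬ u <+: v →
    ∀ w w' : List I, u ++ w < v ++ w' := by
  intro u v h
  induction h with
  | nil =>
    intro hp _ _
    exact absurd List.nil_prefix hp
  | @cons a l₁ l₂ h ih =>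
    intro hp w w'
    refine List.Lex.cons (ih ?_ w w')
    intro ⟨t, ht⟩
    exact hp ⟨t, by rw [List.cons_append, ht]⟩
  | @rel a l₁ b l₂ hab =>
    intro _ w w'
    exact List.Lex.rel hab

/-- If `u ≤ v` and `u ≠ []`, then `u < v ++ u`. -/
lemma lex_lt_append_self {u v : List I} (hu : u ≠ []) (h : u ≤ v) : u < v ++ u := by
  rcases h.lt_or_eq with h | rfl
  · by_cases hp : u <+: v
    · obtain ⟨t, rfl⟩ := hp
      rw [List.append_assoc]
      exact lex_self_append (by simp [hu])
    · have := lex_append_of_not_prefix_s4 h hp [] u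
      simpa using this
  · exact lex_self_append hu

/-- A Lyndon word is smaller than any proper nonempty suffix (restated). -/
lemma IsLyndon.lt_suffix {w v : List I} (hw : IsLyndon w) (u : List I)
    (heq : w = u ++ v) (hu : u ≠ []) (hv : v ≠ []) : w < v :=
  hw.2 u v heq hu hv

/-- If `u < v` are both Lyndon then `u ++ v < v`. -/
lemma lyndon_append_lt {u v : List I} (hu : IsLyndon u) (hv : IsLyndon v)
    (h : u < v) : u ++ v < v := by
  by_cases hp : u <+: v
  · obtain ⟨t, rfl⟩ := hp
    have ht : t ≠ [] := by
      rintro rfl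
      simp at h
    have : u ++ t < t := hv.lt_suffix u rfl hu.1 ht
    exact lex_append_left' u this
  · have := lex_append_of_not_prefix_s4 h hp v []
    simpa using this

/-- Concatenation of Lyndon words `u < v` is Lyndon. -/
lemma lyndon_append {u v : List I} (hu : IsLyndon u) (hv : IsLyndon v)
    (h : u < v) : IsLyndon (u ++ v) := by
  refine ⟨by simp [hu.1], ?_⟩
  intro p q heq hp hq
  have hqsuf : q <:+ u ++ v := ⟨p, heq.symm⟩
  have hvsuf : v <:+ u ++ v := ⟨u, rfl⟩
  rcases le_or_gt q.length v.length with hle | hlt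
  · obtain ⟨t, rfl⟩ := suffix_of_suffix_length_le' hqsuf hvsuf hle
    by_cases ht : t = []
    · subst ht
      simpa using lyndon_append_lt hu hv h
    · calc u ++ (t ++ q) < t ++ q := lyndon_append_lt hu hv h
        _ < q := hv.lt_suffix t rfl ht hq
  · obtain ⟨t, rfl⟩ := suffix_of_suffix_length_le' hvsuf hqsuf hlt.le
    have ht : t ≠ [] := by
      rintro rfl
      simp at hlt
    have hu_eq : u = p ++ t := by
      have : u ++ v = (p ++ t) ++ v := by rw [heq, List.append_assoc]
      exact List.append_cancel_right this
    have hut : u < t := hu.lt_suffix p hu_eq hp ht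
    have hnp : ¬ u <+: t := by
      intro hpre
      have h1 := hpre.length_le
      have h2 := congrArg List.length hu_eq
      simp only [List.length_append] at h2
      have : p.length = 0 := by omega
      exact hp (List.length_eq_zero_iff.mp this)
    exact lex_append_of_not_prefix_s4 hut hnp v v

/-- In a costandard factorization, `r` is the minimal nonempty proper suffix. -/
lemma costandard_min_suffix {m l r : List I} (hcf : IsCostandardFactorization m l r) :
    ∀ s p : List I, m = p ++ s → p ≠ [] → s ≠ [] → r ≤ s := by
  obtain ⟨hm, hl, hr, hlyr, hmax⟩ := hcf
  have key : ∀ n (s p : List I), s.length ≤ n → m = p ++ s → p ≠ [] → s ≠ [] → r ≤ s := by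
    intro n
    induction n with
    | zero =>
      intro s p hlen _ _ hs
      exact absurd (List.length_eq_zero_iff.mp (Nat.le_zero.mp hlen)) hs
    | succ n ih =>
      intro s p hlen heq hp hs
      by_contra hcon
      push_neg at hcon  -- s < r
      have hssuf : s <:+ m := ⟨p, heq.symm⟩
      have hrsuf : r <:+ m := ⟨l, hm.symm⟩
      rcases le_or_gt s.length r.length with hsl | hsl
      · obtain ⟨t, ht⟩ := suffix_of_suffix_length_le' hssuf hrsuf hsl
        by_cases htn : t = []
        · subst htn
          simp at ht
          subst ht
          exact absurd le_rfl (not_le.mpr hcon)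
        · have : r < s := hlyr.2 t s ht.symm htn hs
          exact absurd this.le (not_le.mpr hcon)
      · have hslyn : IsLyndon s := by
          refine ⟨hs, ?_⟩
          intro u v huv hu hv
          have hvlen : v.length < s.length := by
            have h2 := congrArg List.length huv
            simp only [List.length_append] at h2
            have : u.length ≠ 0 := by simpa using hu
            omega
          have hrv : r ≤ v := ih v (p ++ u)
            (by omega) (by rw [heq, huv, List.append_assoc]) (by simp [hp]) hv
          calc s < r := hcon
            _ ≤ v := hrv
        have := hmax p s heq hp hs hslyn
        omega
  intro s p
  exact key s.length s p le_rfl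

/-- For Lyndon words `ℓ = ℓ₁ℓ₂` with `|ℓ₁| > 1`, one has `ℓ₂ = ℓ^r` iff
`ℓ₁^r ≥ ℓ₂`, where `ℓ^r` (resp. `ℓ₁^r`) is the right costandard factor of `ℓ`
(resp. of `ℓ₁`). -/
theorem costandard_right_factor_iff (l l₁ l₂ a r a₁ r₁ : List I)
    (hl : IsLyndon l) (hl₁ : IsLyndon l₁) (hl₂ : IsLyndon l₂)
    (heq : l = l₁ ++ l₂) (hlen : 1 < l₁.length)
    (hcf : IsCostandardFactorization l a r)
    (hcf₁ : IsCostandardFactorization l₁ a₁ r₁) :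
    l₂ = r ↔ l₂ ≤ r₁ := by
  have hcf' := hcf
  obtain ⟨hm, ha, hrne, hlyr, hmax⟩ := hcf
  obtain ⟨hm₁, ha₁, hrne₁, hlyr₁, hmax₁⟩ := hcf₁
  constructor
  · intro h
    by_contra hcon
    push_neg at hcon  -- r₁ < l₂
    have hlyn : IsLyndon (r₁ ++ l₂) := lyndon_append hlyr₁ hl₂ hcon
    have hsplit : l = a₁ ++ (r₁ ++ l₂) := by
      rw [heq, hm₁, List.append_assoc]
    have hmx := hmax a₁ (r₁ ++ l₂) hsplit ha₁ (by simp [hrne₁]) hlyn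
    rw [← h] at hmx
    simp only [List.length_append] at hmx
    have : r₁.length = 0 := by omega
    exact hrne₁ (List.length_eq_zero_iff.mp this)
  · intro h
    have hl₁ne : l₁ ≠ [] := by
      intro hh
      rw [hh] at hlen
      simp at hlen
    have hlen2 : l₂.length ≤ r.length := hmax l₁ l₂ heq hl₁ne hl₂.1 hl₂
    have hsuf : l₂ <:+ r :=
      suffix_of_suffix_length_le' ⟨l₁, heq.symm⟩ ⟨a, hm.symm⟩ hlen2
    obtain ⟨s, hs⟩ := hsuf
    by_cases hsn : s = []
    · subst hsn
      have : r = l₂ := by simpa using hs.symm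
      exact this.symm
    · exfalso
      have hl₁eq : l₁ = a ++ s := by
        have : l₁ ++ l₂ = (a ++ s) ++ l₂ := by
          rw [← heq, hm, ← hs, List.append_assoc]
        exact List.append_cancel_right this
      have hr₁s : r₁ ≤ s :=
        costandard_min_suffix ⟨hm₁, ha₁, hrne₁, hlyr₁, hmax₁⟩ s a hl₁eq ha hsn
      have h2s : l₂ ≤ s := h.trans hr₁s
      have hlt : l₂ < s ++ l₂ := lex_lt_append_self hl₂.1 h2s
      rw [hs] at hlt
      have hgt : r < l₂ := hlyr.2 s l₂ hs.symm hsn hl₂.1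
      exact absurd (hlt.trans hgt) (lt_irrefl _)
end

section
/- Let u be a Lyndon word with a decomposition u = vw where v is a Lyndon word and w is nonempty, and let w = w₁w₂⋯w_N be the canonical factorization of w. Then each of the words vw₁, vw₁w₂, …, vw₁w₂⋯w_N is Lyndon. -/
variable {I : Type*} [LinearOrder I]

/-!
Write `pₖ = v w₁ ⋯ wₖ`. Being a prefix of the Lyndon word `u`, `pₖ` is at most `u`, which is
smaller than its proper suffix `w_N`; and `w_N ≤ w_{k+1}` since the factorization is
decreasing. Hence `pₖ < w_{k+1}`, and the concatenation of Lyndon words `x < y` is Lyndon.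
-/

theorem List.append_lt_append_of_not_isPrefix {α : Type*} [LT α] {a b : List α} (h : a < b)
    (hab : ¬ a <+: b) (s t : List α) : a ++ s < b ++ t := by
  induction h with
  | nil => exact absurd (List.nil_prefix) hab
  | cons _ ih => exact List.Lex.cons (ih fun hp => hab (List.cons_prefix_cons.mpr ⟨rfl, hp⟩))
  | rel h => exact List.Lex.rel h

theorem List.getLast_isSuffix_flatten {α : Type*} {l : List (List α)} (hl : l ≠ []) :
    l.getLast hl <:+ l.flatten :=
  ⟨l.dropLast.flatten, by
    conv_rhs => rw [← List.dropLast_append_getLast hl]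
    simp⟩

namespace IsLyndon

variable {x y s : List I}

theorem lt_of_isSuffix (hx : IsLyndon x) (hs : s <:+ x) (hs₀ : s ≠ []) (hsx : s ≠ x) : x < s := by
  obtain ⟨a, rfl⟩ := hs
  exact hx.2 a s rfl (by rintro rfl; exact hsx rfl) hs₀

theorem append_lt_right (hx : IsLyndon x) (hy : IsLyndon y) (hxy : x < y) : x ++ y < y := by
  by_cases hpre : x <+: y
  · obtain ⟨d, rfl⟩ := hpre
    have hd : d ≠ [] := by rintro rfl; simp at hxy
    exact List.append_left_lt
      (hy.lt_of_isSuffix (List.suffix_append x d) hd (by simpa using hx.1))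
  · simpa using List.append_lt_append_of_not_isPrefix hxy hpre y []

theorem append (hx : IsLyndon x) (hy : IsLyndon y) (hxy : x < y) : IsLyndon (x ++ y) := by
  refine ⟨by simp [hx.1], fun a s hxy_eq ha hs => ?_⟩
  have hlt := hx.append_lt_right hy hxy
  rcases List.append_eq_append_iff.mp hxy_eq with ⟨a', -, rfl⟩ | ⟨c, rfl, rfl⟩
  · by_cases ha' : a' = []
    · simpa [ha'] using hlt
    · exact hlt.trans (hy.lt_of_isSuffix (List.suffix_append a' s) hs (by simpa using ha'))
  · by_cases hc : c = []
    · simpa [hc] using hlt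
    · have hac : a ++ c < c := hx.lt_of_isSuffix (List.suffix_append a c) hc (by simpa using ha)
      have hnpre : ¬ a ++ c <+: c := fun h => ha (by simpa using h.length_le)
      simpa using List.append_lt_append_of_not_isPrefix hac hnpre y y

theorem isPrefix_lt_of_isSuffix {p : List I} (hu : IsLyndon (x ++ y)) (hx : x ≠ [])
    (hp : p <+: x ++ y) (hs : s <:+ y) (hs₀ : s ≠ []) : p < s := by
  obtain ⟨a, rfl⟩ := hs
  exact List.lt_of_le_of_lt hp.le (hu.2 (x ++ a) s (by simp) (by simp [hx]) hs₀)

end IsLyndon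

theorem lyndon_prefix_extensions_general (u v w : List I) (ws : List (List I))
    (hu : IsLyndon u) (hv : IsLyndon v) (heq : u = v ++ w)
    (hws : IsCFLFactorization w ws) :
    ∀ k : ℕ, 1 ≤ k → k ≤ ws.length → IsLyndon (v ++ (ws.take k).flatten) := by
  obtain ⟨rfl, hlyn, hchain⟩ := hws
  subst heq
  have hpw : ws.Pairwise (· ≥ ·) := List.isChain_iff_pairwise.mp hchain
  suffices h : ∀ k ≤ ws.length, IsLyndon (v ++ (ws.take k).flatten) from fun k _ => h k
  intro k hk
  induction k with
  | zero => simpa using hv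
  | succ k ih =>
    have hk' : k < ws.length := hk
    have hmem : ws[k] ∈ ws := List.getElem_mem hk'
    have hprefix : v ++ (ws.take k).flatten <+: v ++ ws.flatten := by
      refine List.prefix_append_right_inj v |>.mpr ⟨(ws.drop k).flatten, ?_⟩
      rw [← List.flatten_append, List.take_append_drop]
    have hlt : v ++ (ws.take k).flatten < ws[k] :=
      (hu.isPrefix_lt_of_isSuffix hv.1 hprefix (List.getLast_isSuffix_flatten _)
        (hlyn _ (List.getLast_mem _)).1).trans_le (hpw.rel_getLast hmem)
    have htake : ws.take (k + 1) = ws.take k ++ [ws[k]] := by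
      rw [List.take_add_one, List.getElem?_eq_getElem hk']; rfl
    rw [htake, List.flatten_append, List.flatten_singleton, ← List.append_assoc]
    exact (ih hk'.le).append (hlyn _ hmem) hlt

/-- If `u = vw` is Lyndon with `v` Lyndon and `w` nonempty with canonical
factorization `w = w₁⋯w_N`, then `vw₁`, `vw₁w₂`, …, `vw₁⋯w_N` are all Lyndon. -/
theorem lyndon_prefix_extensions (u v w : List I) (ws : List (List I))
    (hu : IsLyndon u) (hv : IsLyndon v) (heq : u = v ++ w) (hw : w ≠ [])
    (hws : IsCFLFactorization w ws) :
    ∀ k : ℕ, 1 ≤ k → k ≤ ws.length → IsLyndon (v ++ (ws.take k).flatten) :=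
  lyndon_prefix_extensions_general u v w ws hu hv heq hws
end

section
/- Let u be a Lyndon word with a decomposition u = vw where w is a Lyndon word and v is nonempty, and let v = v₁v₂⋯v_N be the canonical factorization of v. Then each of the words v_Nw, v_{N-1}v_Nw, …, v₁v₂⋯v_Nw is Lyndon. -/
variable {I : Type*} [LinearOrder I]

/-- A word is strictly smaller than any proper extension of it. -/
lemma lt_append_of_ne_nil (p t : List I) (ht : t ≠ []) : p < p ++ t := by
  show List.Lex (· < ·) p (p ++ t)
  induction p with
  | nil =>
    cases t with
    | nil => exact absurd rfl ht
    | cons a l => exact List.Lex.nil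
  | cons a l ih => exact List.Lex.cons ih

lemma prefix_le (p t : List I) : p ≤ p ++ t := by
  cases eq_or_ne t [] with
  | inl h => simp [h]
  | inr h => exact le_of_lt (lt_append_of_ne_nil p t h)

lemma append_lt_append_left (p : List I) {x y : List I} (h : x < y) :
    p ++ x < p ++ y :=
  List.Lex.append_left _ h p

/-- If `x < y` and `x` is not a prefix of `y`, then appending anything
preserves the strict inequality. -/
lemma append_lt_append_of_not_prefix : ∀ {x y : List I}, x < y →
    ¬ x <+: y → ∀ z z' : List I, x ++ z < y ++ z' := by
  intro x y h
  have h' : List.Lex (· < ·) x y := h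
  induction h' with
  | nil => exact fun hp z z' => absurd List.nil_prefix hp
  | @cons a l l' hl ih =>
    intro hp z z'
    have hnp : ¬ l <+: l' := fun hpre => hp (List.cons_prefix_cons.mpr ⟨rfl, hpre⟩)
    exact List.Lex.cons (ih hl hnp z z')
  | @rel a b l l' hab =>
    intro hp z z'
    exact List.Lex.rel hab

/-- Key sublemma: if `l`, `m` are Lyndon with `l < m`, then `l ++ m < m`. -/
lemma append_lt_right {l m : List I} (hl : IsLyndon l) (hm : IsLyndon m)
    (hlm : l < m) : l ++ m < m := by
  by_cases hp : l <+: m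
  · obtain ⟨t, rfl⟩ := hp
    have ht : t ≠ [] := by
      rintro rfl
      rw [List.append_nil] at hlm
      exact lt_irrefl _ hlm
    have hmt : l ++ t < t := hm.2 l t rfl hl.1 ht
    simpa using append_lt_append_left l hmt
  · have h := append_lt_append_of_not_prefix hlm hp m []
    simpa using h

/-- Concatenation of Lyndon words `l < m` is Lyndon. -/
lemma IsLyndon.append_s6 {l m : List I} (hl : IsLyndon l) (hm : IsLyndon m)
    (hlm : l < m) : IsLyndon (l ++ m) := by
  refine ⟨by simp [hl.1], ?_⟩
  intro a b hab ha hb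
  rcases List.append_eq_append_iff.mp hab.symm with ⟨c, hc1, hc2⟩ | ⟨c, hc1, hc2⟩
  · -- l = a ++ c, b = c ++ m (split inside l)
    cases eq_or_ne c [] with
    | inl h =>
      subst h
      simp only [List.append_nil] at hc1 hc2
      subst hc2
      exact append_lt_right hl hm hlm
    | inr h =>
      have hlc : l < c := hl.2 a c hc1 ha h
      have hnp : ¬ l <+: c := by
        intro hpre
        have h1 : l.length ≤ c.length := hpre.length_le
        have h2 : c.length < l.length := by
          subst hc1
          simp only [List.length_append]
          have : 0 < a.length := List.length_pos_iff.mpr ha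
          omega
        omega
      subst hc2
      exact append_lt_append_of_not_prefix hlc hnp m m
  · -- a = l ++ c, m = c ++ b (split inside m or at the junction)
    cases eq_or_ne c [] with
    | inl h =>
      subst h
      simp only [List.nil_append] at hc2
      subst hc2
      exact append_lt_right hl hm hlm
    | inr h =>
      have hmb : m < b := hm.2 c b hc2 h hb
      exact lt_trans (append_lt_right hl hm hlm) hmb

/-- If `u = vw` is Lyndon with `w` Lyndon and `v` nonempty with canonical
factorization `v = v₁⋯v_N`, then `v_Nw`, `v_{N-1}v_Nw`, …, `v₁⋯v_Nw` are all
Lyndon. -/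
theorem lyndon_suffix_extensions (u v w : List I) (vs : List (List I))
    (hu : IsLyndon u) (hw : IsLyndon w) (heq : u = v ++ w) (hv : v ≠ [])
    (hvs : IsCFLFactorization v vs) :
    ∀ k : ℕ, k < vs.length → IsLyndon ((vs.drop k).flatten ++ w) := by
  obtain ⟨hflat, hlyn, hchain⟩ := hvs
  have hpair : vs.Pairwise (· ≥ ·) := List.isChain_iff_pairwise.mp hchain
  have hvs_ne : vs ≠ [] := by rintro rfl; exact hv hflat.symm
  -- every factor is ≤ u
  have hfac_le : ∀ k (hk : k < vs.length), vs[k] ≤ u := by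
    intro k hk
    have h0 : 0 < vs.length := List.length_pos_iff.mpr hvs_ne
    have h1 : vs[k] ≤ vs[0] := by
      rcases Nat.eq_zero_or_pos k with rfl | hkpos
      · exact le_refl _
      · exact List.pairwise_iff_getElem.mp hpair 0 k h0 hk hkpos
    have h2 : vs[0] ≤ u := by
      have hpre : vs[0] <+: u := by
        rcases vs with _ | ⟨a, tl⟩
        · exact absurd rfl hvs_ne
        · have : a ++ (tl.flatten ++ w) = u := by
            rw [heq, ← hflat]; simp
          exact ⟨tl.flatten ++ w, this⟩
      obtain ⟨t, ht⟩ := hpre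
      rw [← ht]; exact prefix_le _ _
    exact le_trans h1 h2
  -- downward induction via the gap n = vs.length - k
  have key : ∀ n k, k < vs.length → vs.length - k ≤ n →
      IsLyndon ((vs.drop k).flatten ++ w) := by
    intro n
    induction n with
    | zero => intro k hk hn; omega
    | succ n ih =>
      intro k hk hn
      have hdrop : vs.drop k = vs[k] :: vs.drop (k + 1) := List.drop_eq_getElem_cons hk
      have hm : IsLyndon ((vs.drop (k + 1)).flatten ++ w) := by
        rcases Nat.lt_or_ge (k + 1) vs.length with h | h
        · exact ih (k + 1) h (by omega)
        · have : vs.drop (k + 1) = [] := List.drop_eq_nil_of_le h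
          rw [this]; simpa using hw
      -- u < (vs.drop (k+1)).flatten ++ w since it is a proper suffix of u
      have hsplit : u = ((vs.take (k + 1)).flatten) ++ ((vs.drop (k + 1)).flatten ++ w) := by
        rw [heq, ← hflat]
        rw [← List.append_assoc, ← List.flatten_append, List.take_append_drop]
      have htake_ne : (vs.take (k + 1)).flatten ≠ [] := by
        intro hnil
        have hmem : vs[k] ∈ vs.take (k + 1) := by
          have : vs[k] = (vs.take (k+1))[k]'(by simp; omega) := by simp
          rw [this]; exact List.getElem_mem _
        have : vs[k] = [] := by
          have := List.flatten_eq_nil_iff.mp hnil _ hmem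
          exact this
        exact (hlyn vs[k] (List.getElem_mem hk)).1 this
      have hsuf_ne : (vs.drop (k + 1)).flatten ++ w ≠ [] := by
        simp [hw.1]
      have hult : u < (vs.drop (k + 1)).flatten ++ w :=
        hu.2 _ _ hsplit htake_ne hsuf_ne
      have hklt : vs[k] < (vs.drop (k + 1)).flatten ++ w :=
        lt_of_le_of_lt (hfac_le k hk) hult
      have := (hlyn vs[k] (List.getElem_mem hk)).append_s6 hm hklt
      rw [hdrop, List.flatten_cons, List.append_assoc]
      exact this
  intro k hk
  exact key (vs.length - k) k hk le_rfl
end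

section
/- Let w be a nonempty word with canonical factorization w = w₁w₂⋯w_n, and let ℓ be a Lyndon word occurring as a factor of w, say w = aℓb. Then this occurrence of ℓ is fully contained in one of the factors w_i: there exist an index i and words p, q such that w_i = pℓq, a = w₁⋯w_{i-1}p, and b = qw_{i+1}⋯w_n. -/
variable {I : Type*} [LinearOrder I]

/-! An occurrence of `ℓ` that crossed a block boundary would start inside a block
`f` and end inside a later block `g`. Then `ℓ` begins with a nonempty suffix `c` of `f` and ends
with a nonempty prefix `t` of `g`, so `f ≤ c ≤ ℓ < t ≤ g ≤ f` by the Lyndon property of `f`,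
the Lyndon property of `ℓ` and the monotonicity of the factorization. -/

-- Core's `List.IsPrefix.le` is about core's `≤` on lists, which Mathlib's linear order replaces.
theorem List.IsPrefix.lex_le {u v : List I} (h : u <+: v) : u ≤ v :=
  not_lt.mp h.le

theorem IsLyndon.le_of_suffix {f c : List I} (hf : IsLyndon f) (hc : c ≠ []) (hcf : c <:+ f) :
    f ≤ c := by
  obtain ⟨a, rfl⟩ := hcf
  rcases eq_or_ne a [] with rfl | ha
  · exact le_rfl
  · exact (hf.2 a c rfl ha hc).le

section Blocks

variable {α : Type*}

/-- Every occurrence of `l` in `ws.flatten` that is not contained in a single block witnesses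
this. -/
def SpansTwoBlocks (ws : List (List α)) (l : List α) : Prop :=
  ∃ f g c m t : List α, [f, g].Sublist ws ∧ c ≠ [] ∧ c <:+ f ∧ t ≠ [] ∧ t <+: g ∧ l = c ++ m ++ t

/-- `t` is the part of `e` lying in the last block that `e` reaches. -/
theorem exists_prefix_of_mem_suffix_of_prefix_flatten {ws : List (List α)} {e : List α}
    (he : e ≠ []) (hpre : e <+: ws.flatten) : ∃ g ∈ ws, ∃ t, t ≠ [] ∧ t <+: g ∧ t <:+ e := by
  induction ws generalizing e with
  | nil => exact absurd (List.prefix_nil.mp hpre) he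
  | cons f rest ih =>
    obtain ⟨r, hr⟩ := hpre
    rcases List.append_eq_append_iff.mp hr with ⟨s, hf, -⟩ | ⟨c, rfl, hrest⟩
    · exact ⟨f, List.mem_cons_self, e, he, ⟨s, hf.symm⟩, List.suffix_refl e⟩
    · rcases eq_or_ne c [] with rfl | hc
      · exact ⟨f, List.mem_cons_self, f, by simpa using he, List.prefix_refl f, by simp⟩
      · obtain ⟨g, hg, t, ht, htg, htc⟩ := ih hc ⟨r, hrest.symm⟩
        exact ⟨g, List.mem_cons_of_mem f hg, t, ht, htg, htc.trans (List.suffix_append f c)⟩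

def OccursInBlock (ws : List (List α)) (a l b : List α) : Prop :=
  ∃ (i : ℕ) (hi : i < ws.length) (p q : List α),
    ws.get ⟨i, hi⟩ = p ++ l ++ q ∧
    a = (ws.take i).flatten ++ p ∧
    b = q ++ (ws.drop (i + 1)).flatten

theorem occursInBlock_head (p l q : List α) (rest : List (List α)) :
    OccursInBlock ((p ++ l ++ q) :: rest) p l (q ++ rest.flatten) :=
  ⟨0, by simp, p, q, rfl, by simp, rfl⟩

theorem OccursInBlock.cons {rest : List (List α)} {a l b : List α}
    (h : OccursInBlock rest a l b) (f : List α) : OccursInBlock (f :: rest) (f ++ a) l b := by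
  obtain ⟨i, hi, p, q, hget, rfl, rfl⟩ := h
  exact ⟨i + 1, by simpa using hi, p, q, by simpa using hget, by simp, by simp⟩

theorem occursInBlock_of_not_spansTwoBlocks {ws : List (List α)} {l a b : List α} (hl : l ≠ [])
    (hspan : ¬ SpansTwoBlocks ws l) (h : ws.flatten = a ++ l ++ b) : OccursInBlock ws a l b := by
  induction ws generalizing a with
  | nil => simp_all
  | cons f rest ih =>
    have ih' : ∀ {a'}, rest.flatten = a' ++ l ++ b → OccursInBlock rest a' l b :=
      ih fun ⟨f', g, c, m, t, hfg, hspan'⟩ => hspan ⟨f', g, c, m, t, hfg.cons f, hspan'⟩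
    rw [List.flatten_cons, List.append_assoc] at h
    rcases List.append_eq_append_iff.mp h with ⟨a', rfl, hrest⟩ | ⟨c, rfl, hlb⟩
    · exact (ih' (by simpa using hrest)).cons f
    rcases List.append_eq_append_iff.mp hlb with ⟨q, rfl, rfl⟩ | ⟨e, rfl, hrest⟩
    · simpa using occursInBlock_head a l q rest
    rcases eq_or_ne c [] with rfl | hc
    · simpa using (ih' (a' := []) (by simpa using hrest)).cons a
    rcases eq_or_ne e [] with rfl | he
    · simpa [hrest] using occursInBlock_head a c [] rest
    obtain ⟨g, hg, t, ht, htg, m, rfl⟩ :=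
      exists_prefix_of_mem_suffix_of_prefix_flatten he ⟨b, hrest.symm⟩
    exact (hspan ⟨a ++ c, g, c, m, t, (List.singleton_sublist.mpr hg).cons_cons _, hc,
      List.suffix_append a c, ht, htg, by simp⟩).elim

end Blocks

theorem not_spansTwoBlocks_of_pairwise_ge {ws : List (List I)} {l : List I}
    (hws : ∀ f ∈ ws, IsLyndon f) (hdec : ws.Pairwise (· ≥ ·)) (hl : IsLyndon l) :
    ¬ SpansTwoBlocks ws l := by
  rintro ⟨f, g, c, m, t, hfg, hc, hcf, ht, htg, rfl⟩
  have hgf : g ≤ f := by simpa using hdec.sublist hfg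
  have hlt : c ++ m ++ t < t := hl.2 (c ++ m) t rfl (by simp [hc]) ht
  have hcl : c ≤ c ++ m ++ t := by
    rw [List.append_assoc]
    exact (List.prefix_append c _).lex_le
  exact lt_irrefl f <|
    calc f ≤ c := (hws f (hfg.subset (by simp))).le_of_suffix hc hcf
      _ ≤ c ++ m ++ t := hcl
      _ < t := hlt
      _ ≤ g := htg.lex_le
      _ ≤ f := hgf

theorem lyndon_factor_in_canonical_block_general (w : List I) (ws : List (List I))
    (l a b : List I) (hws : IsCFLFactorization w ws)
    (hl : IsLyndon l) (heq : w = a ++ l ++ b) :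
    ∃ (i : ℕ) (hi : i < ws.length) (p q : List I),
      ws.get ⟨i, hi⟩ = p ++ l ++ q ∧
      a = (ws.take i).flatten ++ p ∧
      b = q ++ (ws.drop (i + 1)).flatten := by
  obtain ⟨hflat, hlyn, hchain⟩ := hws
  have hdec : ws.Pairwise (· ≥ ·) := List.isChain_iff_pairwise.mp hchain
  exact occursInBlock_of_not_spansTwoBlocks hl.1
    (not_spansTwoBlocks_of_pairwise_ge hlyn hdec hl) (hflat.trans heq)

/-- If `w = w₁⋯w_n` is the canonical factorization and a Lyndon word `ℓ` occurs
as a factor of `w`, say `w = aℓb`, then that occurrence of `ℓ` is fully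
contained in one of the `wᵢ`. -/
theorem lyndon_factor_in_canonical_block (w : List I) (ws : List (List I))
    (l a b : List I) (hw : w ≠ []) (hws : IsCFLFactorization w ws)
    (hl : IsLyndon l) (heq : w = a ++ l ++ b) :
    ∃ (i : ℕ) (hi : i < ws.length) (p q : List I),
      ws.get ⟨i, hi⟩ = p ++ l ++ q ∧
      a = (ws.take i).flatten ++ p ∧
      b = q ++ (ws.drop (i + 1)).flatten :=
  lyndon_factor_in_canonical_block_general w ws l a b hws hl heq
end

section
/- Let ℓ be a Lyndon word of length greater than 1 with standard factorization ℓ = ℓ^{ls}ℓ^{rs}, and let u be a Lyndon word that occurs as a factor of ℓ but is not a suffix of ℓ. Then the standard factorization of ℓ does not split any occurrence of u: for every decomposition ℓ = aub, either |a| + |u| ≤ |ℓ^{ls}| or |ℓ^{ls}| ≤ |a|, where |·| denotes length. -/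
variable {I : Type*} [LinearOrder I]

private lemma lex_append_aux :
    ∀ {x y : List I}, List.Lex (· < ·) x y → y.length ≤ x.length →
      ∀ z w : List I, List.Lex (· < ·) (x ++ z) (y ++ w) := by
  intro x y h
  induction h with
  | nil => intro hlen; simp at hlen
  | cons _ ih =>
      intro hlen z w
      exact List.Lex.cons (ih (by simpa using hlen) z w)
  | rel h => intro _ z w; exact List.Lex.rel h

/-- If `x < y` and `y` is not longer than `x`, the first difference occurs
strictly inside `y`, hence the inequality survives appending arbitrary words. -/
lemma lex_append_of_lt {x y : List I} (h : x < y) (hlen : y.length ≤ x.length)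
    (z w : List I) : x ++ z < y ++ w :=
  lex_append_aux h hlen z w

/-- Key straddle lemma: if `u1` is a nonempty proper suffix of the Lyndon word
`ls` and `u1 ++ u2` is Lyndon with `u2 ≠ []`, then `ls ++ u2` is Lyndon. -/
lemma straddle_lyndon {ls u u1 u2 a : List I} (hls : IsLyndon ls) (hu : IsLyndon u)
    (ha : a ≠ []) (h1 : u1 ≠ []) (h2 : u2 ≠ []) (hlsa : ls = a ++ u1)
    (huu : u = u1 ++ u2) : IsLyndon (ls ++ u2) := by
  have hlsne : ls ≠ [] := hls.1
  refine ⟨by simp [hlsne], ?_⟩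
  intro x s hx hxne hsne
  -- `ls ++ u2 < u1 ++ u2 = u`
  have hlsu1 : ls < u1 := hls.2 a u1 hlsa ha h1
  have hlen1 : u1.length ≤ ls.length := by rw [hlsa]; simp
  have hmain : ls ++ u2 < u := by
    rw [huu]; exact lex_append_of_lt hlsu1 hlen1 u2 u2
  rcases List.append_eq_append_iff.mp hx with ⟨t, hxt, hut⟩ | ⟨t, hlst, hst⟩
  · -- x = ls ++ t, u2 = t ++ s  : s is a suffix of u2, hence of u
    have hus : u < s :=
      hu.2 (u1 ++ t) s (by rw [huu, hut, List.append_assoc]) (by simp [h1]) hsne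
    exact lt_trans hmain hus
  · -- ls = x ++ t, s = t ++ u2
    rcases eq_or_ne t [] with rfl | htne
    · -- s = u2
      have hs2 : s = u2 := by simpa using hst
      subst hs2
      exact lt_trans hmain (hu.2 u1 s huu h1 hsne)
    · have hlst' : ls < t := hls.2 x t hlst hxne htne
      have hlen2 : t.length ≤ ls.length := by rw [hlst]; simp
      rw [hst]
      exact lex_append_of_lt hlst' hlen2 u2 u2

/-- If a Lyndon word `u` occurs as a factor of a Lyndon word `ℓ` (of length
`> 1`, with standard factorization `ℓ = ℓ^{ls}ℓ^{rs}`) and `u` is not a suffix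
of `ℓ`, then the standard factorization does not split any occurrence of `u`:
for every decomposition `ℓ = aub`, either `|a| + |u| ≤ |ℓ^{ls}|` or
`|ℓ^{ls}| ≤ |a|`. -/
theorem standard_factorization_no_split (l ls rs u : List I)
    (hl : IsLyndon l) (hlen : 1 < l.length)
    (hsf : IsStandardFactorization l ls rs) (hu : IsLyndon u)
    (hfac : ∃ a b : List I, l = a ++ u ++ b) (hsuf : ¬ u <:+ l) :
    ∀ a b : List I, l = a ++ u ++ b →
      a.length + u.length ≤ ls.length ∨ ls.length ≤ a.length := by
  intro a b hab
  by_contra hcon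
  push_neg at hcon
  obtain ⟨h1, h2⟩ := hcon
  obtain ⟨hlrs, hlsne, hrsne, hlsl, hmax⟩ := hsf
  -- b is nonempty, otherwise u would be a suffix of l
  have hbne : b ≠ [] := by
    rintro rfl
    exact hsuf ⟨a, by simpa using hab.symm⟩
  rcases eq_or_ne a [] with rfl | hane
  · -- a empty: u itself is a Lyndon proper prefix longer than ls
    have hle : u.length ≤ ls.length := hmax u b (by simpa using hab) hu.1 hbne hu
    simp at h1
    omega
  · set k := ls.length - a.length with hk
    have hk_lt : k ≤ u.length := by omega
    set u1 := u.take k with hu1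
    set u2 := u.drop k with hu2
    have huu : u = u1 ++ u2 := (List.take_append_drop k u).symm
    have hlen1 : u1.length = k := by
      rw [hu1, List.length_take]; omega
    have hlen2 : u2.length = u.length - k := by rw [hu2, List.length_drop]
    have h1ne : u1 ≠ [] := by
      intro h; rw [h] at hlen1; simp at hlen1; omega
    have h2ne : u2 ≠ [] := by
      intro h; rw [h] at hlen2; simp at hlen2; omega
    -- ls = a ++ u1
    have hlsa : ls = a ++ u1 := by
      have e1 : l.take ls.length = ls := by
        rw [hlrs]; exact List.take_left' rfl
      have e2 : l.take ls.length = a ++ u1 := by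
        have hl' : l = (a ++ u1) ++ (u2 ++ b) := by
          rw [hab, huu]; simp [List.append_assoc]
        rw [hl', List.take_left']
        rw [List.length_append, hlen1]; omega
      rw [← e1, e2]
    -- l = (ls ++ u2) ++ b
    have hfact : l = (ls ++ u2) ++ b := by
      rw [hab, huu, hlsa]; simp [List.append_assoc]
    have hlyn : IsLyndon (ls ++ u2) := straddle_lyndon hlsl hu hane h1ne h2ne hlsa huu
    have hle : (ls ++ u2).length ≤ ls.length :=
      hmax (ls ++ u2) b hfact (by simp [hlsne]) hbne hlyn
    rw [List.length_append] at hle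
    have hu2pos : 0 < u2.length := List.length_pos_iff.mpr h2ne
    omega
end

section
/- Let ℓ be a Lyndon word of length greater than 1 with costandard factorization ℓ = ℓ^lℓ^r, and let u be a Lyndon word that occurs as a factor of ℓ but is not a prefix of ℓ. Then the costandard factorization of ℓ does not split any occurrence of u: for every decomposition ℓ = aub, either |a| + |u| ≤ |ℓ^l| or |ℓ^l| ≤ |a|, where |·| denotes length. -/
variable {I : Type*} [LinearOrder I]

private lemma lex_append_of_lt_not_prefix {u v : List I} (h : List.Lex (· < ·) u v)
    (hp : ¬ u <+: v) : ∀ x y : List I, List.Lex (· < ·) (u ++ x) (v ++ y) := by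
  induction h with
  | nil => exact fun x y => absurd (List.nil_prefix) hp
  | @cons a l l' _ ih =>
      intro x y
      exact List.Lex.cons (ih (fun hpre => hp (List.cons_prefix_cons.mpr ⟨rfl, hpre⟩)) x y)
  | rel hab => exact fun x y => List.Lex.rel hab

/-- Every nonempty word has a lexicographically minimal nonempty suffix. -/
private lemma exists_min_suffix :
    ∀ s : List I, s ≠ [] → ∃ m : List I, m <:+ s ∧ m ≠ [] ∧
      ∀ t : List I, t <:+ s → t ≠ [] → m ≤ t := by
  intro s
  induction s with
  | nil => intro h; exact absurd rfl h
  | cons a s ih =>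
      intro _
      rcases eq_or_ne s [] with rfl | hs
      · refine ⟨[a], List.suffix_rfl, by simp, ?_⟩
        intro t ht htne
        rcases List.suffix_cons_iff.mp ht with rfl | h
        · exact le_rfl
        · simp at h; exact absurd h htne
      · obtain ⟨m, hms, hmne, hmin⟩ := ih hs
        rcases le_or_gt (a :: s) m with hle | hlt
        · refine ⟨a :: s, List.suffix_rfl, by simp, ?_⟩
          intro t ht htne
          rcases List.suffix_cons_iff.mp ht with rfl | h
          · exact le_rfl
          · exact hle.trans (hmin t h htne)
        · refine ⟨m, hms.trans (List.suffix_cons a s), hmne, ?_⟩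
          intro t ht htne
          rcases List.suffix_cons_iff.mp ht with rfl | h
          · exact hlt.le
          · exact hmin t h htne

/-- If a Lyndon word `u` occurs as a factor of a Lyndon word `ℓ` (of length
`> 1`, with costandard factorization `ℓ = ℓ^lℓ^r`) and `u` is not a prefix of
`ℓ`, then the costandard factorization does not split any occurrence of `u`:
for every decomposition `ℓ = aub`, either `|a| + |u| ≤ |ℓ^l|` or
`|ℓ^l| ≤ |a|`. -/
theorem costandard_factorization_no_split (l ll lr u : List I)
    (hl : IsLyndon l) (hlen : 1 < l.length)
    (hcf : IsCostandardFactorization l ll lr) (hu : IsLyndon u)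
    (hfac : ∃ a b : List I, l = a ++ u ++ b) (hpre : ¬ u <+: l) :
    ∀ a b : List I, l = a ++ u ++ b →
      a.length + u.length ≤ ll.length ∨ ll.length ≤ a.length := by
  intro a b heq
  by_contra hcon
  push_neg at hcon
  obtain ⟨h1, h2⟩ := hcon
  -- h1 : ll.length < a.length + u.length, h2 : a.length < ll.length
  obtain ⟨hml, hllne, hlrne, hlrL, hmax⟩ := hcf
  -- a is nonempty
  have hane : a ≠ [] := by
    intro h; subst h
    exact hpre ⟨b, by simpa using heq.symm⟩
  have hmllen : l.length = ll.length + lr.length := by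
    rw [hml, List.length_append]
  set k : ℕ := ll.length - a.length with hk
  have hk1 : 1 ≤ k := by omega
  have hku : k < u.length := by omega
  set u1 : List I := u.take k with hu1
  set u2 : List I := u.drop k with hu2
  have huu : u = u1 ++ u2 := (List.take_append_drop k u).symm
  have hu1len : u1.length = k := by
    rw [hu1, List.length_take]; omega
  have heq' : l = a ++ (u ++ b) := by simpa [List.append_assoc] using heq
  -- split the two factorizations of l
  have hsplit : ll ++ lr = (a ++ u1) ++ (u2 ++ b) := by
    calc ll ++ lr = l := hml.symm
      _ = a ++ (u ++ b) := heq'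
      _ = (a ++ u1) ++ (u2 ++ b) := by rw [huu]; simp [List.append_assoc]
  have hlen1 : ll.length = (a ++ u1).length := by
    simp only [List.length_append, hu1len]; omega
  obtain ⟨hll, hlr⟩ := List.append_inj hsplit hlen1
  have hu1ne : u1 ≠ [] := by
    intro h
    have := congrArg List.length h
    rw [hu1len] at this
    simp at this
    omega
  have hu2ne : u2 ≠ [] := by
    intro h
    have := congrArg List.length h
    rw [hu2, List.length_drop] at this
    simp at this
    omega
  -- u < u2
  have huu2 : u < u2 := hu.2 u1 u2 huu hu1ne hu2ne
  have hu2len : u2.length < u.length := by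
    rw [hu2, List.length_drop]; omega
  have hnp : ¬ u <+: u2 := fun h => absurd h.length_le (by omega)
  -- the suffix u ++ b of l is < lr
  have hslt : (u ++ b) < lr := by
    rw [hlr]
    exact lex_append_of_lt_not_prefix (huu2 : List.Lex (· < ·) u u2) hnp b b
  -- minimal nonempty suffix m of u ++ b
  have hubne : u ++ b ≠ [] := by simp [hu.1]
  obtain ⟨m, hmsuf, hmne, hmin⟩ := exists_min_suffix (u ++ b) hubne
  have hmles : m ≤ u ++ b := hmin (u ++ b) List.suffix_rfl hubne
  -- m is a suffix of l
  have hsufl : (u ++ b) <:+ l := ⟨a, heq'.symm⟩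
  have hmsufl : m <:+ l := hmsuf.trans hsufl
  -- m is Lyndon
  have hmL : IsLyndon m := by
    refine ⟨hmne, ?_⟩
    intro p q hpq hpne hqne
    have hqs : q <:+ (u ++ b) := List.IsSuffix.trans ⟨p, hpq.symm⟩ hmsuf
    have hle : m ≤ q := hmin q hqs hqne
    have hne : m ≠ q := by
      intro h
      rw [h] at hpq
      have := congrArg List.length hpq
      simp only [List.length_append] at this
      have : p.length = 0 := by omega
      exact hpne (List.length_eq_zero_iff.mp this)
    exact lt_of_le_of_ne hle hne
  -- m is a proper suffix: get the prefix
  obtain ⟨p, hp⟩ := id hmsufl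
  have hmltl : m.length < l.length := by
    have h3 : (u ++ b).length < l.length := by
      rw [heq']
      simp only [List.length_append]
      have : 0 < a.length := List.length_pos_iff.mpr hane
      omega
    have := hmsuf.length_le
    omega
  have hpne : p ≠ [] := by
    intro h; subst h
    simp only [List.nil_append] at hp
    rw [hp] at hmltl
    omega
  -- by maximality |m| ≤ |lr|
  have hmlen : m.length ≤ lr.length := hmax p m hp.symm hpne hmne hmL
  -- m is a suffix of lr
  have hlrsuf : lr <:+ l := ⟨ll, hml.symm⟩
  have hmlr : m <:+ lr := List.suffix_of_suffix_length_le hmsufl hlrsuf hmlen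
  rcases eq_or_ne m lr with hmeq | hmneq
  · rw [hmeq] at hmles
    exact absurd hslt (not_lt.mpr hmles)
  · obtain ⟨p', hp'⟩ := hmlr
    have hp'ne : p' ≠ [] := by
      intro h; subst h
      simp only [List.nil_append] at hp'
      exact hmneq hp'
    have hlrm : lr < m := hlrL.2 p' m hp'.symm hp'ne hmne
    exact absurd (hslt.trans hlrm) (not_lt.mpr hmles)
end

section
/- Let Δ̃⁺ be the set of positive roots of a polarization of a finite reduced crystallographic root system Δ, with simple roots ε₁, …, ε_n. Suppose i₁, …, i_N ∈ {1, …, n} are indices such that α := ε_{i₁} + ε_{i₂} + ⋯ + ε_{i_N} ∈ Δ̃⁺. Then for every 1 ≤ k ≤ N there exists a permutation σ of {1, …, N} with σ(1) = k such that the partial sums η_r := ε_{i_{σ(1)}} + ⋯ + ε_{i_{σ(r)}} belong to Δ̃⁺ for all 1 ≤ r ≤ N. -/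
open RealInnerProductSpace

variable {V : Type*} [NormedAddCommGroup V] [InnerProductSpace ℝ V]
  [FiniteDimensional ℝ V]

/-- A finite reduced crystallographic root system in a real inner product
space: a finite set of nonzero vectors, stable under the reflections `s_α`,
with integral pairings `2(β,α)/(α,α)`, and such that the only scalar multiples
of a root which are roots are `±` that root. -/
structure IsRootSystem (Δ : Set V) : Prop where
  finite : Δ.Finite
  ne_zero : ∀ α ∈ Δ, α ≠ 0
  reflect_mem : ∀ α ∈ Δ, ∀ β ∈ Δ, β - (2 * ⟪β, α⟫ / ⟪α, α⟫) • α ∈ Δ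
  crystallographic : ∀ α ∈ Δ, ∀ β ∈ Δ, ∃ n : ℤ, (n : ℝ) = 2 * ⟪β, α⟫ / ⟪α, α⟫
  reduced : ∀ α ∈ Δ, ∀ t : ℝ, t • α ∈ Δ → t = 1 ∨ t = -1

/-- An element of a set `P` of positive roots is *simple* if it is not the sum
of two elements of `P`. -/
def IsSimpleRoot (P : Set V) (α : V) : Prop :=
  α ∈ P ∧ ¬ ∃ β ∈ P, ∃ γ ∈ P, α = β + γ

/-!
If `η` and `η + v₁ + ⋯ + v_m` are positive roots, with all `vⱼ` positive roots, then some
`η + vⱼ` is again a positive root. Either `⟪η, vⱼ⟫ < 0` for some `j`, and then `η + vⱼ` is a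
root; or all these inner products are `≥ 0`, so the whole sum has positive inner product with
some `vⱼ`, and removing that `vⱼ` from the sum leaves a positive root with one summand fewer.
Starting from `η = ε_{i_k}`, the summands can therefore be added one at a time.
-/

open Finset

section PartialSums

variable {M : Type*} [AddCommMonoid M] {N : ℕ}

theorem Fin.sum_filter_le_zero (v : Fin (N + 1) → M) :
    ∑ j ∈ univ.filter (· ≤ 0), v j = v 0 := by
  simp only [Fin.le_zero_iff, filter_eq', mem_univ, if_true, sum_singleton]

theorem Fin.sum_filter_le_succ (v : Fin (N + 1) → M) (r : Fin N) :
    ∑ j ∈ univ.filter (· ≤ r.succ), v j = v 0 + ∑ j ∈ univ.filter (· ≤ r), v j.succ := by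
  simp only [sum_filter, Fin.sum_univ_succ, Fin.succ_le_succ_iff, Fin.zero_le, if_true]

theorem exists_perm_cons_of_partialSums_mem {Q : Set M} (v : Fin (N + 1) → M)
    (η : M) (t : Fin (N + 1)) (σ' : Equiv.Perm (Fin N)) (ht : η + v t ∈ Q)
    (hσ' : ∀ r, η + v t + ∑ j ∈ univ.filter (· ≤ r), v (t.succAbove (σ' j)) ∈ Q) :
    ∃ σ : Equiv.Perm (Fin (N + 1)), σ 0 = t ∧
      ∀ r, η + ∑ j ∈ univ.filter (· ≤ r), v (σ j) ∈ Q := by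
  set σ := (Equiv.Perm.decomposeFin.symm (0, σ')).trans t.cycleRange.symm
  have hσ0 : σ 0 = t := by simp [σ]
  have hσsucc : ∀ j, σ j.succ = t.succAbove (σ' j) := by simp [σ]
  refine ⟨σ, hσ0, Fin.cases ?_ fun r => ?_⟩
  · rwa [Fin.sum_filter_le_zero, hσ0]
  · rw [Fin.sum_filter_le_succ, hσ0, ← add_assoc]
    simpa only [hσsucc] using hσ' r

end PartialSums

section RootSystem

variable {E : Type*} [NormedAddCommGroup E] [InnerProductSpace ℝ E] {Δ : Set E} {α β : E}

namespace IsRootSystem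

theorem neg_mem (hΔ : IsRootSystem Δ) (hα : α ∈ Δ) : -α ∈ Δ := by
  have h := hΔ.reflect_mem α hα α hα
  rwa [mul_div_assoc, div_self (real_inner_self_pos.mpr (hΔ.ne_zero α hα)).ne', mul_one,
    two_smul, sub_add_cancel_left] at h

/-- Strict Cauchy–Schwarz: two roots with positive inner product are proportional only if
they are equal, by reducedness. -/
theorem inner_mul_inner_lt (hΔ : IsRootSystem Δ) (hα : α ∈ Δ) (hβ : β ∈ Δ) (hne : α ≠ β)
    (hpos : 0 < ⟪α, β⟫) : ⟪α, β⟫ * ⟪α, β⟫ < ⟪α, α⟫ * ⟪β, β⟫ := by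
  refine (real_inner_mul_inner_self_le α β).lt_of_ne fun heq => hne ?_
  have hnorm : ⟪α, β⟫ = ‖α‖ * ‖β‖ := by
    rw [real_inner_self_eq_norm_mul_norm, real_inner_self_eq_norm_mul_norm,
      mul_mul_mul_comm] at heq
    exact (mul_self_inj hpos.le (by positivity)).mp heq
  have hα0 := hΔ.ne_zero α hα
  have hβ0 := hΔ.ne_zero β hβ
  obtain ⟨-, r, hr, rfl⟩ := (real_inner_div_norm_mul_norm_eq_one_iff α β).mp
    (by rw [hnorm, div_self (by positivity)])
  rcases hΔ.reduced α hα r hβ with rfl | rfl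
  · rw [one_smul]
  · exact absurd hr (by norm_num)

theorem sub_mem_of_inner_pos (hΔ : IsRootSystem Δ) (hα : α ∈ Δ) (hβ : β ∈ Δ) (hne : α ≠ β)
    (hpos : 0 < ⟪α, β⟫) : α - β ∈ Δ := by
  have hαα := real_inner_self_pos.mpr (hΔ.ne_zero α hα)
  have hββ := real_inner_self_pos.mpr (hΔ.ne_zero β hβ)
  obtain ⟨m, hm⟩ := hΔ.crystallographic β hβ α hα
  obtain ⟨q, hq⟩ := hΔ.crystallographic α hα β hβ
  have hm0 : (0 : ℝ) < m := by rw [hm]; positivity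
  have hq0 : (0 : ℝ) < q := by rw [hq, real_inner_comm]; positivity
  have hmq : (m : ℝ) * q < 4 := by
    rw [hm, hq, real_inner_comm α β, div_mul_div_comm, div_lt_iff₀ (by positivity)]
    nlinarith [hΔ.inner_mul_inner_lt hα hβ hne hpos]
  -- the Cartan integers are positive with product `< 4`, so one of them is `1`
  have hone : m = 1 ∨ q = 1 := by
    have : 0 < m := by exact_mod_cast hm0
    have : 0 < q := by exact_mod_cast hq0
    have : m * q < 4 := by exact_mod_cast hmq
    by_contra! h
    have : 2 ≤ m := by omega
    have : 2 ≤ q := by omega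
    nlinarith
  rcases hone with rfl | rfl
  · have h := hΔ.reflect_mem β hβ α hα
    rwa [← hm, Int.cast_one, one_smul] at h
  · have h := hΔ.neg_mem (hΔ.reflect_mem α hα β hβ)
    rwa [← hq, Int.cast_one, one_smul, neg_sub] at h

theorem add_mem_of_inner_neg (hΔ : IsRootSystem Δ) (hα : α ∈ Δ) (hβ : β ∈ Δ) (hne : α ≠ -β)
    (hneg : ⟪α, β⟫ < 0) : α + β ∈ Δ := by
  simpa using hΔ.sub_mem_of_inner_pos hα (hΔ.neg_mem hβ) hne (by rwa [inner_neg_right, neg_pos])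

end IsRootSystem

def positiveRoots (Δ : Set E) (f : E →ₗ[ℝ] ℝ) : Set E := {α | α ∈ Δ ∧ 0 < f α}

variable {f : E →ₗ[ℝ] ℝ}

theorem add_mem_positiveRoots (hΔ : IsRootSystem Δ) (hα : α ∈ positiveRoots Δ f)
    (hβ : β ∈ positiveRoots Δ f) (hneg : ⟪α, β⟫ < 0) : α + β ∈ positiveRoots Δ f := by
  refine ⟨hΔ.add_mem_of_inner_neg hα.1 hβ.1 (fun h => ?_) hneg, by simpa using add_pos hα.2 hβ.2⟩
  have hfα := hα.2
  rw [h, map_neg, neg_pos] at hfα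
  exact hfα.not_gt hβ.2

theorem sub_mem_positiveRoots (hΔ : IsRootSystem Δ) (hα : α ∈ positiveRoots Δ f)
    (hβ : β ∈ positiveRoots Δ f) (hlt : f β < f α) (hpos : 0 < ⟪α, β⟫) :
    α - β ∈ positiveRoots Δ f :=
  ⟨hΔ.sub_mem_of_inner_pos hα.1 hβ.1 (by rintro rfl; exact hlt.false) hpos,
    by simpa using hlt⟩

theorem exists_add_mem_positiveRoots (hΔ : IsRootSystem Δ) {ι : Type*} [DecidableEq ι]
    {v : ι → E} (hv : ∀ j, v j ∈ positiveRoots Δ f) {η : E} (hη : η ∈ positiveRoots Δ f)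
    {R : Finset ι} (hR : R.Nonempty) (hsum : η + ∑ j ∈ R, v j ∈ positiveRoots Δ f) :
    ∃ t ∈ R, η + v t ∈ positiveRoots Δ f := by
  induction R using Finset.strongInduction with
  | H R ih =>
  by_cases hneg : ∃ t ∈ R, ⟪η, v t⟫ < 0
  · obtain ⟨t, ht, hneg⟩ := hneg
    exact ⟨t, ht, add_mem_positiveRoots hΔ hη (hv t) hneg⟩
  push Not at hneg
  have hβ : 0 < ⟪∑ j ∈ R, v j, ∑ j ∈ R, v j⟫ := by
    refine real_inner_self_pos.mpr fun h => ?_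
    have : 0 < f (∑ j ∈ R, v j) := by rw [map_sum]; exact sum_pos (fun j _ => (hv j).2) hR
    simp [h] at this
  have hpos : ∑ j ∈ R, (0 : ℝ) < ∑ t ∈ R, ⟪η + ∑ j ∈ R, v j, v t⟫ := by
    rw [sum_const_zero, ← inner_sum, inner_add_left, inner_sum]
    exact add_pos_of_nonneg_of_pos (sum_nonneg hneg) hβ
  obtain ⟨t, ht, hpos⟩ := exists_lt_of_sum_lt hpos
  have hsplit : ∑ j ∈ R, v j = v t + ∑ j ∈ R.erase t, v j := (add_sum_erase R v ht).symm
  rcases (R.erase t).eq_empty_or_nonempty with hR' | hR'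
  · rw [hsplit, hR', sum_empty, add_zero] at hsum
    exact ⟨t, ht, hsum⟩
  have hrest : (η + ∑ j ∈ R, v j) - v t = η + ∑ j ∈ R.erase t, v j := by rw [hsplit]; abel
  have hlt : f (v t) < f (η + ∑ j ∈ R, v j) := by
    rw [← sub_pos, ← map_sub, hrest, map_add, map_sum]
    exact add_pos_of_pos_of_nonneg hη.2 (sum_nonneg fun j _ => (hv j).2.le)
  have hmem := sub_mem_positiveRoots hΔ hsum (hv t) hlt hpos
  rw [hrest] at hmem
  obtain ⟨s, hs, hs'⟩ := ih _ (erase_ssubset ht) hR' hmem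
  exact ⟨s, mem_of_mem_erase hs, hs'⟩

theorem exists_perm_partialSums_mem_positiveRoots (hΔ : IsRootSystem Δ) {N : ℕ}
    (v : Fin N → E) (hv : ∀ j, v j ∈ positiveRoots Δ f) {η : E} (hη : η ∈ positiveRoots Δ f)
    (hsum : η + ∑ j, v j ∈ positiveRoots Δ f) :
    ∃ σ : Equiv.Perm (Fin N), ∀ r, η + ∑ j ∈ univ.filter (· ≤ r), v (σ j) ∈ positiveRoots Δ f := by
  induction N generalizing η with
  | zero => exact ⟨1, fun r => r.elim0⟩
  | succ N ih =>
    obtain ⟨t, -, ht⟩ := exists_add_mem_positiveRoots hΔ hv hη univ_nonempty hsum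
    obtain ⟨σ', hσ'⟩ := ih (fun j => v (t.succAbove j)) (fun j => hv _) ht
      (by rwa [add_assoc, ← Fin.sum_univ_succAbove])
    obtain ⟨σ, -, hσ⟩ := exists_perm_cons_of_partialSums_mem v η t σ' ht hσ'
    exact ⟨σ, hσ⟩

end RootSystem

theorem simple_root_sum_reorder_general (Δ : Set V) (hΔ : IsRootSystem Δ)
    (f : V →ₗ[ℝ] ℝ)
    (P : Set V) (hP : P = {α | α ∈ Δ ∧ 0 < f α})
    {n N : ℕ} (hN : 0 < N) (ε : Fin n → V)
    (hsimple : ∀ j : Fin n, IsSimpleRoot P (ε j))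
    (i : Fin N → Fin n)
    (hα : (∑ j, ε (i j)) ∈ P) (k : Fin N) :
    ∃ σ : Equiv.Perm (Fin N), σ ⟨0, hN⟩ = k ∧
      ∀ r : Fin N,
        (∑ j ∈ Finset.univ.filter (fun j => j ≤ r), ε (i (σ j))) ∈ P := by
  replace hP : P = positiveRoots Δ f := hP
  subst hP
  obtain ⟨M, rfl⟩ := Nat.exists_eq_add_one_of_ne_zero hN.ne'
  have hε : ∀ j, ε (i j) ∈ positiveRoots Δ f := fun j => (hsimple (i j)).1
  obtain ⟨σ', hσ'⟩ := exists_perm_partialSums_mem_positiveRoots hΔ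
    (fun j => ε (i (k.succAbove j))) (fun j => hε _) (hε k)
    (by rwa [← Fin.sum_univ_succAbove (fun j => ε (i j)) k])
  obtain ⟨σ, hσk, hσ⟩ := exists_perm_cons_of_partialSums_mem
    (Q := positiveRoots Δ f) (fun j => ε (i j)) 0 k σ' (by rw [zero_add]; exact hε k)
    (by simpa only [zero_add] using hσ')
  exact ⟨σ, hσk, fun r => by simpa only [zero_add] using hσ r⟩

/-- Let `Δ̃⁺` be the positive roots of a polarization (given by a linear
functional `f` nonvanishing on roots) of a finite reduced crystallographic root
system `Δ`, with simple roots `ε₁,…,ε_n`.  If `α = ε_{i₁} + ⋯ + ε_{i_N} ∈ Δ̃⁺`,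
then for every `1 ≤ k ≤ N` there is a permutation `σ` of `{1,…,N}` with
`σ(1) = k` such that all partial sums `ε_{i_{σ(1)}} + ⋯ + ε_{i_{σ(r)}}` lie in
`Δ̃⁺`. -/
theorem simple_root_sum_reorder (Δ : Set V) (hΔ : IsRootSystem Δ)
    (f : V →ₗ[ℝ] ℝ) (hf : ∀ α ∈ Δ, f α ≠ 0)
    (P : Set V) (hP : P = {α | α ∈ Δ ∧ 0 < f α})
    {n N : ℕ} (hN : 0 < N) (ε : Fin n → V)
    (hsimple : ∀ j : Fin n, IsSimpleRoot P (ε j))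
    (i : Fin N → Fin n)
    (hα : (∑ j, ε (i j)) ∈ P) (k : Fin N) :
    ∃ σ : Equiv.Perm (Fin N), σ ⟨0, hN⟩ = k ∧
      ∀ r : Fin N,
        (∑ j ∈ Finset.univ.filter (fun j => j ≤ r), ε (i (σ j))) ∈ P :=
  simple_root_sum_reorder_general Δ hΔ f P hP hN ε hsimple i hα k
end

section
/- Let α, β, γ be roots of a finite reduced crystallographic root system Δ such that α + β + γ ∈ Δ and none of the pairwise sums α + β, α + γ, β + γ is zero. Then at least two of the three pairwise sums α + β, α + γ, β + γ belong to Δ. -/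
open RealInnerProductSpace

variable {V : Type*} [NormedAddCommGroup V] [InnerProductSpace ℝ V]
  [FiniteDimensional ℝ V]

set_option linter.unusedSectionVars false
private lemma inner_self_pos' {μ : V} (h : μ ≠ 0) : (0:ℝ) < ⟪μ, μ⟫ := by
  rw [real_inner_self_eq_norm_mul_norm]
  exact mul_pos (norm_pos_iff.mpr h) (norm_pos_iff.mpr h)

lemma IsRootSystem.neg_mem_s12 {Δ : Set V} (hΔ : IsRootSystem Δ) {μ : V} (hμ : μ ∈ Δ) :
    -μ ∈ Δ := by
  have h := hΔ.reflect_mem μ hμ μ hμ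
  have h0 : ⟪μ, μ⟫ ≠ 0 := (inner_self_pos' (hΔ.ne_zero μ hμ)).ne'
  rw [show (2 * ⟪μ, μ⟫ / ⟪μ, μ⟫ : ℝ) = 2 from by field_simp] at h
  rw [show μ - (2:ℝ) • μ = -μ from by module] at h
  exact h

lemma IsRootSystem.add_mem_of_inner_neg_s12 {Δ : Set V} (hΔ : IsRootSystem Δ) {μ ν : V}
    (hμ : μ ∈ Δ) (hν : ν ∈ Δ) (hneg : ⟪μ, ν⟫ < 0) (hne : μ + ν ≠ 0) : μ + ν ∈ Δ := by
  obtain ⟨n, hn⟩ := hΔ.crystallographic μ hμ ν hν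
  obtain ⟨m, hm⟩ := hΔ.crystallographic ν hν μ hμ
  have hμ0 : (0:ℝ) < ⟪μ, μ⟫ := inner_self_pos' (hΔ.ne_zero μ hμ)
  have hν0 : (0:ℝ) < ⟪ν, ν⟫ := inner_self_pos' (hΔ.ne_zero ν hν)
  have hcomm : ⟪ν, μ⟫ = ⟪μ, ν⟫ := real_inner_comm μ ν
  have hnneg : (n:ℝ) < 0 := by
    rw [hn, hcomm]; exact div_neg_of_neg_of_pos (by linarith) hμ0
  have hmneg : (m:ℝ) < 0 := by
    rw [hm]; exact div_neg_of_neg_of_pos (by linarith) hν0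
  have hμn : (0:ℝ) < ‖μ‖ := norm_pos_iff.mpr (hΔ.ne_zero μ hμ)
  have hνn : (0:ℝ) < ‖ν‖ := norm_pos_iff.mpr (hΔ.ne_zero ν hν)
  -- strict Cauchy-Schwarz
  have hcs : ⟪μ, ν⟫ * ⟪μ, ν⟫ < ⟪μ, μ⟫ * ⟪ν, ν⟫ := by
    have habs : |⟪μ, ν⟫| ≤ ‖μ‖ * ‖ν‖ := abs_real_inner_le_norm μ ν
    rcases lt_or_eq_of_le habs with h | h
    · calc ⟪μ, ν⟫ * ⟪μ, ν⟫ = |⟪μ, ν⟫| * |⟪μ, ν⟫| := by rw [← abs_mul, abs_mul_self]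
      _ < (‖μ‖ * ‖ν‖) * (‖μ‖ * ‖ν‖) :=
          mul_lt_mul' (le_of_lt h) h (abs_nonneg _) (mul_pos hμn hνn)
      _ = ⟪μ, μ⟫ * ⟪ν, ν⟫ := by
          rw [real_inner_self_eq_norm_mul_norm, real_inner_self_eq_norm_mul_norm]; ring
    · exfalso
      have h' : ⟪μ, -ν⟫ = ‖μ‖ * ‖-ν‖ := by
        rw [inner_neg_right, norm_neg, ← h, abs_of_neg hneg]
      have h'' := inner_eq_norm_mul_iff_real.mp h'
      rw [norm_neg] at h''
      -- h'' : ‖ν‖ • μ = ‖μ‖ • (-ν)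
      have key : (-(‖μ‖ / ‖ν‖)) • ν = μ := by
        apply smul_right_injective V hνn.ne'
        show ‖ν‖ • (-(‖μ‖ / ‖ν‖)) • ν = ‖ν‖ • μ
        rw [h'', smul_smul, smul_neg, ← neg_smul]
        congr 1
        field_simp
      rcases hΔ.reduced ν hν (-(‖μ‖ / ‖ν‖)) (by rw [key]; exact hμ) with h1 | h1
      · have : (0:ℝ) < ‖μ‖ / ‖ν‖ := div_pos hμn hνn
        linarith
      · apply hne
        rw [← key, h1, neg_one_smul, neg_add_cancel]
  have hprod : (n:ℝ) * (m:ℝ) < 4 := by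
    rw [hn, hm, hcomm, div_mul_div_comm, div_lt_iff₀ (by positivity)]
    nlinarith
  have hprodZ : n * m < 4 := by exact_mod_cast hprod
  have hnZ : n ≤ -1 := by
    have : n < 0 := by exact_mod_cast hnneg
    omega
  have hmZ : m ≤ -1 := by
    have : m < 0 := by exact_mod_cast hmneg
    omega
  have hcase : n = -1 ∨ m = -1 := by
    by_contra hcon
    push_neg at hcon
    have h1 : n ≤ -2 := by omega
    have h2 : m ≤ -2 := by omega
    nlinarith
  rcases hcase with h | h
  · have hr := hΔ.reflect_mem μ hμ ν hν
    rw [← hn, h] at hr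
    rwa [show ν - ((-1:ℤ):ℝ) • μ = μ + ν from by push_cast; module] at hr
  · have hr := hΔ.reflect_mem ν hν μ hμ
    rw [← hm, h] at hr
    rwa [show μ - ((-1:ℤ):ℝ) • ν = μ + ν from by push_cast; module] at hr

lemma one_of_two (Δ : Set V) (hΔ : IsRootSystem Δ)
    (α β γ : V) (hα : α ∈ Δ) (hβ : β ∈ Δ) (hγ : γ ∈ Δ)
    (hsum : α + β + γ ∈ Δ)
    (hab : α + β ≠ 0) (hac : α + γ ≠ 0) (hbc : β + γ ≠ 0) :
    α + β ∈ Δ ∨ α + γ ∈ Δ := by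
  set δ := α + β + γ with hδ
  rcases lt_or_ge ⟪α, β⟫ 0 with h1 | h1
  · exact Or.inl (hΔ.add_mem_of_inner_neg_s12 hα hβ h1 hab)
  rcases lt_or_ge ⟪α, γ⟫ 0 with h2 | h2
  · exact Or.inr (hΔ.add_mem_of_inner_neg_s12 hα hγ h2 hac)
  rcases lt_or_ge 0 ⟪β, δ⟫ with h3 | h3
  · right
    have hneg : ⟪-β, δ⟫ < 0 := by rw [inner_neg_left]; linarith
    have hne : -β + δ ≠ 0 := by
      rw [hδ, show -β + (α + β + γ) = α + γ from by abel]; exact hac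
    have := hΔ.add_mem_of_inner_neg_s12 (hΔ.neg_mem_s12 hβ) hsum hneg hne
    rwa [hδ, show -β + (α + β + γ) = α + γ from by abel] at this
  rcases lt_or_ge 0 ⟪γ, δ⟫ with h4 | h4
  · left
    have hneg : ⟪-γ, δ⟫ < 0 := by rw [inner_neg_left]; linarith
    have hne : -γ + δ ≠ 0 := by
      rw [hδ, show -γ + (α + β + γ) = α + β from by abel]; exact hab
    have := hΔ.add_mem_of_inner_neg_s12 (hΔ.neg_mem_s12 hγ) hsum hneg hne
    rwa [hδ, show -γ + (α + β + γ) = α + β from by abel] at this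
  · exfalso
    have hδ0 : (0:ℝ) < ‖δ‖ := norm_pos_iff.mpr (hΔ.ne_zero δ hsum)
    have hα0 : (0:ℝ) < ‖α‖ := norm_pos_iff.mpr (hΔ.ne_zero α hα)
    have hdd : ⟪δ, δ⟫ = ⟪α, δ⟫ + ⟪β, δ⟫ + ⟪γ, δ⟫ := by
      nth_rewrite 1 [hδ]
      rw [inner_add_left, inner_add_left]
    have had : ⟪α, δ⟫ = ⟪α, α⟫ + ⟪α, β⟫ + ⟪α, γ⟫ := by
      nth_rewrite 1 [hδ]
      rw [inner_add_right, inner_add_right]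
    have h5 : ⟪δ, δ⟫ ≤ ⟪α, δ⟫ := by rw [hdd]; linarith
    have h6 : ⟪α, α⟫ ≤ ⟪α, δ⟫ := by rw [had]; linarith
    have hcs : ⟪α, δ⟫ ≤ ‖α‖ * ‖δ‖ := real_inner_le_norm α δ
    rw [real_inner_self_eq_norm_mul_norm] at h5 h6
    have hle1 : ‖δ‖ ≤ ‖α‖ := by nlinarith
    have hle2 : ‖α‖ ≤ ‖δ‖ := by nlinarith
    have heq : ‖α‖ = ‖δ‖ := le_antisymm hle2 hle1
    have hinner : ⟪α, δ⟫ = ‖α‖ * ‖δ‖ := by nlinarith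
    have h7 := inner_eq_norm_mul_iff_real.mp hinner
    rw [← heq] at h7
    have hαδ : α = δ := smul_right_injective V hα0.ne' h7
    apply hbc
    calc β + γ = (α + β + γ) - α := by abel
    _ = δ - α := by rw [← hδ]
    _ = 0 := by rw [← hαδ, sub_self]

/-- If `α, β, γ` are roots with `α + β + γ` a root and none of the pairwise
sums `α + β`, `α + γ`, `β + γ` equal to zero, then at least two of these
pairwise sums are roots. -/
theorem two_of_three_pairwise_sums_are_roots (Δ : Set V) (hΔ : IsRootSystem Δ)
    (α β γ : V) (hα : α ∈ Δ) (hβ : β ∈ Δ) (hγ : γ ∈ Δ)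
    (hsum : α + β + γ ∈ Δ)
    (hab : α + β ≠ 0) (hac : α + γ ≠ 0) (hbc : β + γ ≠ 0) :
    (α + β ∈ Δ ∧ α + γ ∈ Δ) ∨ (α + β ∈ Δ ∧ β + γ ∈ Δ) ∨
      (α + γ ∈ Δ ∧ β + γ ∈ Δ) := by
  have C1 := one_of_two Δ hΔ α β γ hα hβ hγ hsum hab hac hbc
  have C2 := one_of_two Δ hΔ β α γ hβ hα hγ
    (by rwa [show β + α + γ = α + β + γ from by abel])
    (by rwa [add_comm β α]) hbc hac
  have C3 := one_of_two Δ hΔ γ α β hγ hα hβ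
    (by rwa [show γ + α + β = α + β + γ from by abel])
    (by rwa [add_comm γ α]) (by rwa [add_comm γ β]) hab
  rw [add_comm β α] at C2
  rw [add_comm γ α, add_comm γ β] at C3
  tauto
end

section
/- Let ℓ be a Lyndon word, let t, s ≥ 1, let w₁, …, w_t and v₁, …, v_s be nonempty words, and let p₁, …, p_t, q₁, …, q_s be nonnegative integers with p_i > 0 and q_j > 0 for all i, j > 1. Assume, for every index i: (a) ℓ is not a factor of w_i nor of v_i; (b) every nonempty suffix of w_i and of v_i is strictly greater than ℓ. Define w = ℓ^{p₁}w₁ℓ^{p₂}w₂⋯ℓ^{p_t}w_t, w' = ℓ^{p₁+1}w₁ℓ^{p₂+1}w₂⋯ℓ^{p_t+1}w_t, v = ℓ^{q₁}v₁ℓ^{q₂}v₂⋯ℓ^{q_s}v_s, and v' = ℓ^{q₁+1}v₁ℓ^{q₂+1}v₂⋯ℓ^{q_s+1}v_s. Then w > v if and only if w' > v'. -/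
variable {I : Type*} [LinearOrder I]

/-- The word `ℓ^{p₁}w₁ℓ^{p₂}w₂⋯ℓ^{p_t}w_t` built from a list of pairs
`(pᵢ, wᵢ)`, where `ℓ^p` denotes `p` concatenated copies of `ℓ`. -/
def chunkWord (l : List I) (pw : List (ℕ × List I)) : List I :=
  (pw.map fun x => (List.replicate x.1 l).flatten ++ x.2).flatten

/-!
Record the factorization `ℓ^{p₁}w₁⋯ℓ^{p_t}w_t` by its list of keys `(pᵢ, wᵢ)`, where exponents
are compared in reverse and blocks lexicographically. Under the hypotheses the words compare
exactly as their key lists do. At the first block where the factorizations differ, a larger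
exponent gives the smaller word, because `ℓ` is below every nonempty suffix of a block without
being a prefix of it. For equal exponents `wᵢ < vᵢ` decides, even when `wᵢ` is a proper prefix
of `vᵢ`: the remainder of `vᵢ` is then a suffix of a block, and the rest of the left word is
empty or begins with `ℓ`. Adding one to every exponent does not change the order of the keys.
-/

open OrderDual

namespace List

variable {α : Type*}

theorem append_lt_append_left_iff [LinearOrder α] (a : List α) {b c : List α} :
    a ++ b < a ++ c ↔ b < c := by
  induction a with
  | nil => rfl
  | cons x a ih => simpa using ih

theorem nil_lt_of_ne_nil [LT α] {l : List α} (h : l ≠ []) : [] < l := by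
  obtain ⟨a, l, rfl⟩ := exists_cons_of_ne_nil h
  exact nil_lt_cons a l

theorem append_lt_append_of_lt_of_not_prefix [LT α] {x y : List α} (h : x < y)
    (hxy : ¬ x <+: y) (z z' : List α) : x ++ z < y ++ z' := by
  induction h with
  | nil => exact absurd nil_prefix hxy
  | cons h ih => exact Lex.cons (ih (fun hp => hxy (cons_prefix_cons.2 ⟨rfl, hp⟩)))
  | rel hab => exact Lex.rel hab

end List

def IsChunkBlock (l w : List I) : Prop :=
  w ≠ [] ∧ (¬ ∃ a b : List I, w = a ++ l ++ b) ∧ ∀ s : List I, s ≠ [] → s <:+ w → l < s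

theorem IsChunkBlock.append_lt_append_of_suffix {l w c : List I} (hw : IsChunkBlock l w)
    (hc : c ≠ []) (hcw : c <:+ w) (z z' : List I) : l ++ z < c ++ z' := by
  refine List.append_lt_append_of_lt_of_not_prefix (hw.2.2 c hc hcw) ?_ z z'
  rintro ⟨b, rfl⟩
  obtain ⟨a, rfl⟩ := hcw
  exact hw.2.1 ⟨a, b, by simp⟩

omit [LinearOrder I] in
theorem chunkWord_cons (l : List I) (p : ℕ) (w : List I) (pw : List (ℕ × List I)) :
    chunkWord l ((p, w) :: pw) = (List.replicate p l).flatten ++ (w ++ chunkWord l pw) := by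
  simp [chunkWord]

theorem chunkWord_lt_append {l c : List I} {pw : List (ℕ × List I)} (hpos : ∀ x ∈ pw, 0 < x.1)
    (hlc : ∀ z z' : List I, l ++ z < c ++ z') (z' : List I) : chunkWord l pw < c ++ z' := by
  match pw, hpos with
  | [], _ => exact List.nil_lt_of_ne_nil fun h => List.not_lt_nil _ (h ▸ hlc [] z')
  | (p + 1, w) :: pw, _ =>
    rw [chunkWord_cons, List.replicate_succ, List.flatten_cons, List.append_assoc]
    exact hlc _ z'
  | (0, w) :: pw, hpos => exact absurd (hpos _ List.mem_cons_self) (lt_irrefl 0)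

theorem chunkWord_cons_lt_of_exp_lt {l v : List I} (hv : IsChunkBlock l v) {p q : ℕ}
    (hqp : q < p) (w : List I) (pw qv : List (ℕ × List I)) :
    chunkWord l ((p, w) :: pw) < chunkWord l ((q, v) :: qv) := by
  obtain ⟨d, rfl⟩ : ∃ d, p = q + (d + 1) := ⟨p - q - 1, by omega⟩
  rw [chunkWord_cons, chunkWord_cons, List.replicate_add, List.flatten_append,
    List.append_assoc, List.append_lt_append_left_iff, List.replicate_succ, List.flatten_cons,
    List.append_assoc]
  exact hv.append_lt_append_of_suffix hv.1 List.suffix_rfl _ _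

theorem chunkWord_cons_lt_of_lt {l w v : List I} (hv : IsChunkBlock l v) (hwv : w < v) (p : ℕ)
    {pw : List (ℕ × List I)} (hpos : ∀ x ∈ pw, 0 < x.1) (qv : List (ℕ × List I)) :
    chunkWord l ((p, w) :: pw) < chunkWord l ((p, v) :: qv) := by
  rw [chunkWord_cons, chunkWord_cons, List.append_lt_append_left_iff]
  by_cases hpre : w <+: v
  · obtain ⟨c, rfl⟩ := hpre
    have hc : c ≠ [] := by
      rintro rfl
      simp at hwv
    rw [List.append_assoc, List.append_lt_append_left_iff]
    exact chunkWord_lt_append hpos (hv.append_lt_append_of_suffix hc (List.suffix_append w c)) _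
  · exact List.append_lt_append_of_lt_of_not_prefix hwv hpre _ _

def chunkKey (x : ℕ × List I) : ℕᵒᵈ ×ₗ List I :=
  toLex (toDual x.1, x.2)

theorem chunkKey_lt_chunkKey_iff {x y : ℕ × List I} :
    chunkKey x < chunkKey y ↔ y.1 < x.1 ∨ x.1 = y.1 ∧ x.2 < y.2 :=
  Prod.Lex.toLex_lt_toLex

omit [LinearOrder I] in
theorem chunkKey_injective : Function.Injective (chunkKey (I := I)) :=
  fun _ _ h => Prod.ext (toDual.injective (congrArg (·.1) h)) (congrArg (·.2) h)

theorem chunkWord_lt_of_map_chunkKey_lt {l : List I} {pw qv : List (ℕ × List I)}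
    (hpos : ∀ x ∈ pw.tail, 0 < x.1) (hqv : ∀ x ∈ qv, IsChunkBlock l x.2)
    (h : pw.map chunkKey < qv.map chunkKey) : chunkWord l pw < chunkWord l qv := by
  induction pw generalizing qv with
  | nil =>
    obtain _ | ⟨⟨q, v⟩, qv⟩ := qv
    · exact absurd h (List.not_lt_nil _)
    · refine List.nil_lt_of_ne_nil ?_
      simp [chunkWord_cons, (hqv _ List.mem_cons_self).1]
  | cons x pw ih =>
    obtain _ | ⟨y, qv⟩ := qv
    · exact absurd h (List.not_lt_nil _)
    obtain ⟨p, w⟩ := x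
    obtain ⟨q, v⟩ := y
    have hv := hqv _ List.mem_cons_self
    rw [List.map_cons, List.map_cons, List.cons_lt_cons_iff, chunkKey_lt_chunkKey_iff] at h
    rcases h with (hqp | ⟨rfl, hwv⟩) | ⟨heq, htail⟩
    · exact chunkWord_cons_lt_of_exp_lt hv hqp w pw qv
    · exact chunkWord_cons_lt_of_lt hv hwv p hpos qv
    · obtain ⟨rfl, rfl⟩ := Prod.mk.inj (chunkKey_injective heq)
      rw [chunkWord_cons, chunkWord_cons, List.append_lt_append_left_iff,
        List.append_lt_append_left_iff]
      exact ih (fun x hx => hpos x (List.mem_of_mem_tail hx))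
        (fun x hx => hqv x (List.mem_cons_of_mem _ hx)) htail

theorem chunkWord_lt_chunkWord_iff {l : List I} {pw qv : List (ℕ × List I)}
    (hpw : ∀ x ∈ pw, IsChunkBlock l x.2) (hqv : ∀ x ∈ qv, IsChunkBlock l x.2)
    (hpos_pw : ∀ x ∈ pw.tail, 0 < x.1) (hpos_qv : ∀ x ∈ qv.tail, 0 < x.1) :
    chunkWord l pw < chunkWord l qv ↔ pw.map chunkKey < qv.map chunkKey := by
  refine ⟨fun h => ?_, chunkWord_lt_of_map_chunkKey_lt hpos_pw hqv⟩
  rcases lt_trichotomy (pw.map chunkKey) (qv.map chunkKey) with hlt | heq | hgt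
  · exact hlt
  · rw [List.map_injective_iff.2 chunkKey_injective heq] at h
    exact absurd h (lt_irrefl _)
  · exact absurd (chunkWord_lt_of_map_chunkKey_lt hpos_qv hpw hgt) (lt_asymm h)

theorem map_chunkKey_lt_map_chunkKey_succ_iff {pw qv : List (ℕ × List I)} :
    (pw.map fun x => (x.1 + 1, x.2)).map chunkKey <
        (qv.map fun x => (x.1 + 1, x.2)).map chunkKey ↔
      pw.map chunkKey < qv.map chunkKey := by
  induction pw generalizing qv with
  | nil => cases qv <;> simp
  | cons x pw ih =>
    cases qv with
    | nil => simp
    | cons y qv =>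
      simp only [List.map_cons, List.cons_lt_cons_iff, ih, chunkKey_lt_chunkKey_iff,
        chunkKey_injective.eq_iff, add_lt_add_iff_right, add_left_inj, Prod.ext_iff]

theorem chunk_lift_gt_iff_general (l : List I)
    (pw qv : List (ℕ × List I))
    (hw_ne : ∀ x ∈ pw, x.2 ≠ []) (hv_ne : ∀ x ∈ qv, x.2 ≠ [])
    (hw_fac : ∀ x ∈ pw, ¬ ∃ a b : List I, x.2 = a ++ l ++ b)
    (hv_fac : ∀ x ∈ qv, ¬ ∃ a b : List I, x.2 = a ++ l ++ b)
    (hw_suf : ∀ x ∈ pw, ∀ s : List I, s ≠ [] → s <:+ x.2 → l < s)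
    (hv_suf : ∀ x ∈ qv, ∀ s : List I, s ≠ [] → s <:+ x.2 → l < s)
    (hw_pos : ∀ x ∈ pw.tail, 0 < x.1) (hv_pos : ∀ x ∈ qv.tail, 0 < x.1) :
    chunkWord l qv < chunkWord l pw ↔
      chunkWord l (qv.map fun x => (x.1 + 1, x.2)) <
        chunkWord l (pw.map fun x => (x.1 + 1, x.2)) := by
  have hpw : ∀ x ∈ pw, IsChunkBlock l x.2 := fun x hx => ⟨hw_ne x hx, hw_fac x hx, hw_suf x hx⟩
  have hqv : ∀ x ∈ qv, IsChunkBlock l x.2 := fun x hx => ⟨hv_ne x hx, hv_fac x hx, hv_suf x hx⟩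
  have hblk_succ {rv : List (ℕ × List I)} (h : ∀ x ∈ rv, IsChunkBlock l x.2) :
      ∀ x ∈ rv.map (fun x => (x.1 + 1, x.2)), IsChunkBlock l x.2 :=
    List.forall_mem_map.2 h
  have hpos_succ (rv : List (ℕ × List I)) :
      ∀ x ∈ (rv.map fun x => (x.1 + 1, x.2)).tail, 0 < x.1 := by
    rw [← List.map_tail]
    exact List.forall_mem_map.2 fun _ _ => Nat.succ_pos _
  rw [chunkWord_lt_chunkWord_iff hqv hpw hv_pos hw_pos,
    chunkWord_lt_chunkWord_iff (hblk_succ hqv) (hblk_succ hpw)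
      (hpos_succ qv) (hpos_succ pw),
    map_chunkKey_lt_map_chunkKey_succ_iff]

/-- Let `ℓ` be Lyndon, `w = ℓ^{p₁}w₁⋯ℓ^{p_t}w_t`, `v = ℓ^{q₁}v₁⋯ℓ^{q_s}v_s`
(`t, s ≥ 1`, `wᵢ`, `vⱼ` nonempty, `pᵢ, qⱼ > 0` for `i, j > 1`), where `ℓ` is
not a factor of any `wᵢ`, `vⱼ` and every nonempty suffix of each `wᵢ`, `vⱼ`
is `> ℓ`.  Let `w'`, `v'` be obtained by increasing every exponent by `1`.
Then `w > v ↔ w' > v'`. -/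
theorem chunk_lift_gt_iff (l : List I) (hl : IsLyndon l)
    (pw qv : List (ℕ × List I)) (hpw : pw ≠ []) (hqv : qv ≠ [])
    (hw_ne : ∀ x ∈ pw, x.2 ≠ []) (hv_ne : ∀ x ∈ qv, x.2 ≠ [])
    (hw_fac : ∀ x ∈ pw, ¬ ∃ a b : List I, x.2 = a ++ l ++ b)
    (hv_fac : ∀ x ∈ qv, ¬ ∃ a b : List I, x.2 = a ++ l ++ b)
    (hw_suf : ∀ x ∈ pw, ∀ s : List I, s ≠ [] → s <:+ x.2 → l < s)
    (hv_suf : ∀ x ∈ qv, ∀ s : List I, s ≠ [] → s <:+ x.2 → l < s)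
    (hw_pos : ∀ x ∈ pw.tail, 0 < x.1) (hv_pos : ∀ x ∈ qv.tail, 0 < x.1) :
    chunkWord l qv < chunkWord l pw ↔
      chunkWord l (qv.map fun x => (x.1 + 1, x.2)) <
        chunkWord l (pw.map fun x => (x.1 + 1, x.2)) :=
  chunk_lift_gt_iff_general l pw qv hw_ne hv_ne hw_fac hv_fac hw_suf hv_suf hw_pos hv_pos
end

section
/- Let ℓ be a Lyndon word and y a nonempty word, let t, s ≥ 1, let w₁, …, w_t and v₁, …, v_s be (possibly empty) words, and let p₁, …, p_t, q₁, …, q_s be nonnegative integers. Assume, for every index i: (1) every nonempty suffix of w_i and of v_i is strictly greater than y; (2) y is not a factor of w_i nor of v_i; (3) ℓ is not a prefix of w_i nor of v_i; (4) ℓ > y, ℓ > w_i, and ℓ > v_i. Define w = yℓ^{p₁}w₁yℓ^{p₂}w₂⋯yℓ^{p_t}w_t, w' = yℓ^{p₁+1}w₁yℓ^{p₂+1}w₂⋯yℓ^{p_t+1}w_t, v = yℓ^{q₁}v₁yℓ^{q₂}v₂⋯yℓ^{q_s}v_s, and v' = yℓ^{q₁+1}v₁yℓ^{q₂+1}v₂⋯yℓ^{q_s+1}v_s.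 Then w > v if and only if w' > v'. -/
/-!
For words as in the theorem, `chunkWordY y l qv < chunkWordY y l pw` holds exactly when the
list of pairs `(qᵢ, vᵢ)` is lexicographically below the list of pairs `(pᵢ, wᵢ)`, pairs being
compared first by exponent and then by word. A smaller exponent loses because what follows it
is `< ℓ`: words below the Lyndon word `ℓ` are closed under concatenation, and every
`y ℓ^p wᵢ ⋯` is again below `ℓ` since `y < ℓ`. With equal exponents the smaller middle word
loses because the next block begins with `y`, which lies below every nonempty suffix of the
larger middle word without being one of its factors.
Raising every exponent by one preserves the order of pairs.
-/

variable {I : Type*} [LinearOrder I]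

/-- The word `yℓ^{p₁}w₁yℓ^{p₂}w₂⋯yℓ^{p_t}w_t` built from a list of pairs
`(pᵢ, wᵢ)`, where `ℓ^p` denotes `p` concatenated copies of `ℓ`. -/
def chunkWordY (y l : List I) (pw : List (ℕ × List I)) : List I :=
  (pw.map fun x => y ++ (List.replicate x.1 l).flatten ++ x.2).flatten

theorem List.append_lt_append_of_not_prefix {α : Type*} [LT α] {a b : List α} (h : a < b)
    (hp : ¬ a <+: b) (s t : List α) : a ++ s < b ++ t := by
  induction a generalizing b with
  | nil => exact absurd List.nil_prefix hp
  | cons x a ih =>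
    cases b with
    | nil => exact absurd h (List.not_lt_nil _)
    | cons z b =>
      rcases List.cons_lt_cons_iff.mp h with hxz | ⟨rfl, hab⟩
      · exact List.Lex.rel hxz
      · exact List.cons_lt_cons_iff.mpr
          (Or.inr ⟨rfl, ih hab fun hp' => hp (List.cons_prefix_cons.mpr ⟨rfl, hp'⟩)⟩)

theorem List.append_lt_append_left_iff_s14 {α : Type*} [LinearOrder α] (u : List α) {a b : List α} :
    u ++ a < u ++ b ↔ a < b :=
  StrictMono.lt_iff_lt fun _ _ => List.append_left_lt

theorem List.map_lt_map_iff {α β : Type*} [LinearOrder α] [LinearOrder β] {f : α → β}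
    (hf : StrictMono f) {l₁ l₂ : List α} : l₁.map f < l₂.map f ↔ l₁ < l₂ :=
  StrictMono.lt_iff_lt fun _ _ => List.map_lt fun _ _ h => hf h

namespace IsLyndon

variable {l : List I}

theorem lt_of_eq_append (hl : IsLyndon l) {u v : List I} (huv : l = u ++ v) (hu : u ≠ [])
    (hv : v ≠ []) : l < v :=
  hl.2 u v huv hu hv

theorem append_lt (hl : IsLyndon l) {u v : List I} (hu : u < l) (hv : v < l) : u ++ v < l := by
  by_cases hpre : u <+: l
  · obtain ⟨z, rfl⟩ := hpre
    by_cases hu₀ : u = []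
    · simpa [hu₀] using hv
    have hz : z ≠ [] := by rintro rfl; simp at hu
    exact (List.append_lt_append_left_iff_s14 u).mpr (hv.trans (hl.lt_of_eq_append rfl hu₀ hz))
  · simpa using List.append_lt_append_of_not_prefix hu hpre v []

/-- If `y < l` is a proper prefix `l = y c`, then `l < c` and `c` is too short to begin
with `l`, so anything below `l` or beginning with `l` is below `c`. -/
theorem append_lt_of_lt_or_prefix (hl : IsLyndon l) {y s : List I} (hy : y ≠ []) (hyl : y < l)
    (hs : s < l ∨ l <+: s) : y ++ s < l := by
  by_cases hpre : y <+: l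
  · obtain ⟨c, rfl⟩ := hpre
    have hc : c ≠ [] := by rintro rfl; simp at hyl
    have hlc := hl.lt_of_eq_append rfl hy hc
    rw [List.append_lt_append_left_iff_s14]
    rcases hs with hs | ⟨t, rfl⟩
    · exact hs.trans hlc
    · have hshort : ¬ y ++ c <+: c := fun h => by
        have := h.length_le
        simp only [List.length_append] at this
        exact hy (List.length_eq_zero_iff.mp (by omega))
      simpa using List.append_lt_append_of_not_prefix hlc hshort t []
  · simpa using List.append_lt_append_of_not_prefix hyl hpre s []

end IsLyndon

/-- Conditions (1), (2) and the second half of (4) on a word `wᵢ` following `y ℓ^{pᵢ}`. -/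
def IsChunkTail (y l w : List I) : Prop :=
  (∀ s : List I, s ≠ [] → s <:+ w → y < s) ∧ (¬ ∃ a b : List I, w = a ++ y ++ b) ∧ w < l

theorem chunkWordY_cons {α : Type*} (y l : List α) (p : ℕ) (w : List α) (r : List (ℕ × List α)) :
    chunkWordY y l ((p, w) :: r) =
      y ++ ((List.replicate p l).flatten ++ (w ++ chunkWordY y l r)) := by
  simp [chunkWordY]

theorem chunkWordY_eq_nil_or_prefix {α : Type*} (y l : List α) (r : List (ℕ × List α)) :
    chunkWordY y l r = [] ∨ y <+: chunkWordY y l r := by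
  rcases r with _ | ⟨⟨p, w⟩, r⟩
  · exact Or.inl rfl
  · exact Or.inr (chunkWordY_cons y l p w r ▸ List.prefix_append _ _)

/-- When `w = v z`, the hypotheses give `y < z` with `y` not a prefix of `z`, so `y r < z D`. -/
theorem append_lt_append_of_lt_of_suffixes_gt {y v w : List I} (hvw : v < w)
    (hsuf : ∀ s : List I, s ≠ [] → s <:+ w → y < s) (hfac : ¬ ∃ a b : List I, w = a ++ y ++ b)
    {C : List I} (hC : C = [] ∨ y <+: C) (D : List I) : v ++ C < w ++ D := by
  by_cases hpre : v <+: w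
  · obtain ⟨z, rfl⟩ := hpre
    have hz : z ≠ [] := by rintro rfl; simp at hvw
    rw [List.append_assoc, List.append_lt_append_left_iff_s14]
    rcases hC with rfl | ⟨r, rfl⟩
    · obtain ⟨a, t, rfl⟩ := List.exists_cons_of_ne_nil hz
      exact List.nil_lt_cons a _
    · have hyz : y < z := hsuf z hz (List.suffix_append v z)
      have hnp : ¬ y <+: z := fun ⟨b, hb⟩ => hfac ⟨v, b, by rw [← hb, List.append_assoc]⟩
      exact List.append_lt_append_of_not_prefix hyz hnp r D
  · exact List.append_lt_append_of_not_prefix hvw hpre C D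

section chunkWordY

variable {y l : List I}

theorem chunkWordY_lt (hl : IsLyndon l) (hy : y ≠ []) (hyl : y < l) {r : List (ℕ × List I)}
    (hr : ∀ x ∈ r, x.2 < l) : chunkWordY y l r < l := by
  induction r with
  | nil =>
    obtain ⟨a, t, rfl⟩ := List.exists_cons_of_ne_nil hl.1
    exact List.nil_lt_cons a t
  | cons x r ih =>
    obtain ⟨p, w⟩ := x
    have htail : w ++ chunkWordY y l r < l :=
      hl.append_lt (hr _ List.mem_cons_self) (ih fun x hx => hr x (List.mem_cons_of_mem _ hx))
    rw [chunkWordY_cons]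
    refine hl.append_lt_of_lt_or_prefix hy hyl ?_
    rcases p with _ | p
    · simpa using Or.inl htail
    · exact Or.inr (by simp [List.replicate_succ, List.append_assoc])

theorem chunkWordY_cons_lt_of_fst_lt (hl : IsLyndon l) (hy : y ≠ []) (hyl : y < l) {q p : ℕ}
    (hqp : q < p) {v : List I} (w : List I) (hv : v < l) {qt : List (ℕ × List I)}
    (hqt : ∀ x ∈ qt, x.2 < l) (pt : List (ℕ × List I)) :
    chunkWordY y l ((q, v) :: qt) < chunkWordY y l ((p, w) :: pt) := by
  obtain ⟨k, rfl⟩ := Nat.exists_eq_add_of_lt hqp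
  have hrest : v ++ chunkWordY y l qt < l := hl.append_lt hv (chunkWordY_lt hl hy hyl hqt)
  rw [chunkWordY_cons, chunkWordY_cons, List.append_lt_append_left_iff_s14, Nat.add_assoc,
    List.replicate_add, List.flatten_append, List.append_assoc, List.append_lt_append_left_iff_s14]
  simpa [List.replicate_succ, List.append_assoc] using List.Lex.append_right _ _ hrest

theorem chunkWordY_cons_lt_of_snd_lt {q : ℕ} {v w : List I} (hvw : v < w)
    (hsuf : ∀ s : List I, s ≠ [] → s <:+ w → y < s) (hfac : ¬ ∃ a b : List I, w = a ++ y ++ b)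
    (qt pt : List (ℕ × List I)) :
    chunkWordY y l ((q, v) :: qt) < chunkWordY y l ((q, w) :: pt) := by
  rw [chunkWordY_cons, chunkWordY_cons, List.append_lt_append_left_iff_s14,
    List.append_lt_append_left_iff_s14]
  exact append_lt_append_of_lt_of_suffixes_gt hvw hsuf hfac (chunkWordY_eq_nil_or_prefix y l qt) _

theorem chunkWordY_cons_lt_cons_iff (x : ℕ × List I) (qt pt : List (ℕ × List I)) :
    chunkWordY y l (x :: qt) < chunkWordY y l (x :: pt) ↔
      chunkWordY y l qt < chunkWordY y l pt := by
  obtain ⟨p, w⟩ := x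
  simp only [chunkWordY_cons, List.append_lt_append_left_iff_s14]

theorem chunkWordY_lt_chunkWordY_of_lt (hl : IsLyndon l) (hy : y ≠ []) (hyl : y < l)
    {qv pw : List (ℕ × List I)} (hqv : ∀ x ∈ qv, IsChunkTail y l x.2)
    (hpw : ∀ x ∈ pw, IsChunkTail y l x.2) (h : qv.map toLex < pw.map toLex) :
    chunkWordY y l qv < chunkWordY y l pw := by
  induction qv generalizing pw with
  | nil =>
    obtain _ | ⟨⟨p, w⟩, pt⟩ := pw
    · simp at h
    · obtain ⟨a, t, rfl⟩ := List.exists_cons_of_ne_nil hy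
      rw [chunkWordY_cons]
      exact List.nil_lt_cons a _
  | cons x qt ih =>
    obtain _ | ⟨⟨p, w⟩, pt⟩ := pw
    · simp at h
    obtain ⟨q, v⟩ := x
    have hv := hqv _ List.mem_cons_self
    have hw := hpw _ List.mem_cons_self
    simp only [List.map_cons, List.cons_lt_cons_iff, Prod.Lex.toLex_lt_toLex,
      EmbeddingLike.apply_eq_iff_eq] at h
    rcases h with (hqp | ⟨rfl, hvw⟩) | ⟨heq, htail⟩
    · exact chunkWordY_cons_lt_of_fst_lt hl hy hyl hqp w hv.2.2
        (fun x hx => (hqv x (List.mem_cons_of_mem _ hx)).2.2) pt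
    · exact chunkWordY_cons_lt_of_snd_lt hvw hw.1 hw.2.1 qt pt
    · rw [heq, chunkWordY_cons_lt_cons_iff]
      exact ih (fun x hx => hqv x (List.mem_cons_of_mem _ hx))
        (fun x hx => hpw x (List.mem_cons_of_mem _ hx)) htail

theorem chunkWordY_lt_chunkWordY_iff (hl : IsLyndon l) (hy : y ≠ []) (hyl : y < l)
    {qv pw : List (ℕ × List I)} (hqv : ∀ x ∈ qv, IsChunkTail y l x.2)
    (hpw : ∀ x ∈ pw, IsChunkTail y l x.2) :
    chunkWordY y l qv < chunkWordY y l pw ↔ qv.map toLex < pw.map toLex := by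
  refine ⟨fun h => ?_, chunkWordY_lt_chunkWordY_of_lt hl hy hyl hqv hpw⟩
  rcases lt_trichotomy (qv.map toLex) (pw.map toLex) with hlt | heq | hgt
  · exact hlt
  · rw [List.map_injective_iff.mpr toLex.injective heq] at h
    exact absurd h (lt_irrefl _)
  · exact absurd h (chunkWordY_lt_chunkWordY_of_lt hl hy hyl hpw hqv hgt).asymm

end chunkWordY

theorem chunkY_lift_gt_iff_general (y l : List I) (hy : y ≠ []) (hl : IsLyndon l)
    (pw qv : List (ℕ × List I))
    (hw_suf : ∀ x ∈ pw, ∀ s : List I, s ≠ [] → s <:+ x.2 → y < s)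
    (hv_suf : ∀ x ∈ qv, ∀ s : List I, s ≠ [] → s <:+ x.2 → y < s)
    (hw_fac : ∀ x ∈ pw, ¬ ∃ a b : List I, x.2 = a ++ y ++ b)
    (hv_fac : ∀ x ∈ qv, ¬ ∃ a b : List I, x.2 = a ++ y ++ b)
    (hly : y < l)
    (hw_lt : ∀ x ∈ pw, x.2 < l) (hv_lt : ∀ x ∈ qv, x.2 < l) :
    chunkWordY y l qv < chunkWordY y l pw ↔
      chunkWordY y l (qv.map fun x => (x.1 + 1, x.2)) <
        chunkWordY y l (pw.map fun x => (x.1 + 1, x.2)) := by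
  have hw : ∀ x ∈ pw, IsChunkTail y l x.2 := fun x hx => ⟨hw_suf x hx, hw_fac x hx, hw_lt x hx⟩
  have hv : ∀ x ∈ qv, IsChunkTail y l x.2 := fun x hx => ⟨hv_suf x hx, hv_fac x hx, hv_lt x hx⟩
  let succFst : ℕ ×ₗ List I → ℕ ×ₗ List I := fun x => toLex ((ofLex x).1 + 1, (ofLex x).2)
  have hsucc : StrictMono succFst := fun a b h => by
    simpa [succFst, Prod.Lex.toLex_lt_toLex] using Prod.Lex.lt_iff.mp h
  have hmap (r : List (ℕ × List I)) :
      (r.map fun x => (x.1 + 1, x.2)).map toLex = (r.map toLex).map succFst := by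
    simp only [List.map_map]; rfl
  calc chunkWordY y l qv < chunkWordY y l pw ↔ qv.map toLex < pw.map toLex :=
        chunkWordY_lt_chunkWordY_iff hl hy hly hv hw
    _ ↔ (qv.map toLex).map succFst < (pw.map toLex).map succFst := (List.map_lt_map_iff hsucc).symm
    _ ↔ _ := by
      rw [← hmap, ← hmap]
      refine (chunkWordY_lt_chunkWordY_iff hl hy hly ?_ ?_).symm
      exacts [List.forall_mem_map.2 hv, List.forall_mem_map.2 hw]

/-- Let `ℓ` be Lyndon and `y` nonempty, `w = yℓ^{p₁}w₁⋯yℓ^{p_t}w_t`,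
`v = yℓ^{q₁}v₁⋯yℓ^{q_s}v_s` (`t, s ≥ 1`, `wᵢ`, `vⱼ` possibly empty), where:
(1) every nonempty suffix of each `wᵢ`, `vⱼ` is `> y`;
(2) `y` is not a factor of any `wᵢ`, `vⱼ`;
(3) `ℓ` is not a prefix of any `wᵢ`, `vⱼ`;
(4) `ℓ > y`, `ℓ > wᵢ`, `ℓ > vⱼ`.
Let `w'`, `v'` be obtained by increasing every exponent by `1`.
Then `w > v ↔ w' > v'`. -/
theorem chunkY_lift_gt_iff (y l : List I) (hy : y ≠ []) (hl : IsLyndon l)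
    (pw qv : List (ℕ × List I)) (hpw : pw ≠ []) (hqv : qv ≠ [])
    (hw_suf : ∀ x ∈ pw, ∀ s : List I, s ≠ [] → s <:+ x.2 → y < s)
    (hv_suf : ∀ x ∈ qv, ∀ s : List I, s ≠ [] → s <:+ x.2 → y < s)
    (hw_fac : ∀ x ∈ pw, ¬ ∃ a b : List I, x.2 = a ++ y ++ b)
    (hv_fac : ∀ x ∈ qv, ¬ ∃ a b : List I, x.2 = a ++ y ++ b)
    (hw_pre : ∀ x ∈ pw, ¬ l <+: x.2) (hv_pre : ∀ x ∈ qv, ¬ l <+: x.2)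
    (hly : y < l)
    (hw_lt : ∀ x ∈ pw, x.2 < l) (hv_lt : ∀ x ∈ qv, x.2 < l) :
    chunkWordY y l qv < chunkWordY y l pw ↔
      chunkWordY y l (qv.map fun x => (x.1 + 1, x.2)) <
        chunkWordY y l (pw.map fun x => (x.1 + 1, x.2)) :=
  chunkY_lift_gt_iff_general y l hy hl pw qv hw_suf hv_suf hw_fac hv_fac hly hw_lt hv_lt
end
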